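/- arXiv:1802.01184 — 8 statements merged into one kernel-verified Lean document; each statement's English description precedes it below -/
import Mathlib

section
/- Let G be an m×n matrix over F₂ with columns v₁,…,vₙ, and let V ⊆ F₂ⁿ be the span of the rows of G. Suppose K ≥ 1 is an integer such that for every index i with vᵢ ≠ 0 there exist at least K pairwise disjoint two-element sets {j,l} ⊆ {1,…,n}∖{i} with vᵢ = vⱼ + vₗ. Then every coset of V^⊥ in F₂ⁿ contains a vector of Hamming weight at most n/(K+1); equivalently, the covering radius of V^⊥ is at most n/(K+1). -/
/-!
Take a vector `z` of minimal weight in the coset `x + V^⊥`, i.e. a minimal set `S` of columns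
with prescribed sum. Exchanging a subset `A ⊆ S` for a set `D` of columns outside `S` with the
same sum cannot decrease the weight, so `#A ≤ #D`. Consequently each `i ∈ S` has `vᵢ ≠ 0`, its
`K` pairs `{j, l}` avoid `S`, and three pairs belonging to three distinct indices of `S` have a
symmetric difference of size at least `3`. The pairs, labelled by their index, then form a graph
on the complement of `S` in which every edge `{a, b}` satisfies `1/deg a + 1/deg b ≥ 1`; summing
over edges gives at most as many edges as vertices, so `K * #S ≤ n - #S`.
-/

/-- The dual of a set of vectors in `F₂ⁿ`: all vectors orthogonal to every element. -/
def dualSet {n : ℕ} (V : Set (Fin n → ZMod 2)) : Set (Fin n → ZMod 2) :=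
  {y | ∀ x ∈ V, ∑ i, x i * y i = 0}

open Finset symmDiff

namespace Finset

theorem sum_smul_eq_sum_filter_ne_zero {ι M : Type*} [Fintype ι] [AddCommGroup M]
    [Module (ZMod 2) M] (y : ι → ZMod 2) (v : ι → M) :
    ∑ i, y i • v i = ∑ i with y i ≠ 0, v i := by
  rw [sum_filter]
  refine sum_congr rfl fun i _ => ?_
  obtain h | h : y i = 0 ∨ y i = 1 := by generalize y i = a; decide +revert
  all_goals simp [h]

variable {α : Type*} [DecidableEq α]

theorem sum_symmDiff_eq_add {M : Type*} [AddCommGroup M] [Module (ZMod 2) M] (f : α → M)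
    (s t : Finset α) : ∑ i ∈ s ∆ t, f i = ∑ i ∈ s, f i + ∑ i ∈ t, f i := by
  have h := sum_sdiff (f := f) (inter_subset_union : s ∩ t ⊆ s ∪ t)
  rw [← show s ∆ t = (s ∪ t) \ (s ∩ t) from symmDiff_eq_sup_sdiff_inf s t] at h
  rw [← sum_union_inter, ← h, add_assoc, ZModModule.add_self, add_zero]

theorem exists_eq_pair_of_card_eq_two {s : Finset α} (hs : #s = 2) {a : α} (ha : a ∈ s) :
    ∃ x, s = {a, x} := by
  obtain ⟨x, hx⟩ := card_eq_one.1 (by rw [card_erase_of_mem ha, hs] : #(s.erase a) = 1)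
  exact ⟨x, by rw [← insert_erase ha, hx]⟩

theorem pair_symmDiff_pair_symmDiff_pair_subset {a b x y : α} (hab : a ≠ b) :
    ({a, x} : Finset α) ∆ {a, b} ∆ {b, y} ⊆ {x, y} := by
  intro t ht
  simp only [mem_symmDiff, mem_insert, mem_singleton] at ht ⊢
  grind

end Finset

section Graph

variable {ε α β : Type*} [DecidableEq α]

def incidentEdges (E : Finset ε) (ends : ε → Finset α) (a : α) : Finset ε :=
  {e ∈ E | a ∈ ends e}

@[simp]
theorem mem_incidentEdges {E : Finset ε} {ends : ε → Finset α} {a : α} {e : ε} :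
    e ∈ incidentEdges E ends a ↔ e ∈ E ∧ a ∈ ends e :=
  mem_filter

theorem sum_sum_ends_eq_sum_card_incidentEdges_nsmul {M : Type*} [AddCommMonoid M]
    (E : Finset ε) (ends : ε → Finset α) (f : α → M) :
    ∑ e ∈ E, ∑ a ∈ ends e, f a = ∑ a ∈ E.biUnion ends, #(incidentEdges E ends a) • f a := by
  rw [sum_comm' (t' := E.biUnion ends) (s' := incidentEdges E ends)]
  · simp only [sum_const]
  · intro e a
    simp only [mem_incidentEdges, mem_biUnion]
    exact ⟨fun h => ⟨h, e, h⟩, fun h => h.1⟩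

/-- The graph formed by the pairs `{j, l}` with `vᵢ = vⱼ + vₗ`, labelled by `i`, for `i` in a
minimal-weight coset representative. -/
structure IsMatchingLabelling (E : Finset ε) (ends : ε → Finset α) (label : ε → β) : Prop where
  card_ends : ∀ e ∈ E, #(ends e) = 2
  disjoint_of_label_eq : ∀ e ∈ E, ∀ e' ∈ E, e ≠ e' → label e = label e' →
    Disjoint (ends e) (ends e')
  three_le_card_symmDiff : ∀ e₁ ∈ E, ∀ e₂ ∈ E, ∀ e₃ ∈ E, label e₁ ≠ label e₂ →
    label e₁ ≠ label e₃ → label e₂ ≠ label e₃ → 3 ≤ #(ends e₁ ∆ ends e₂ ∆ ends e₃)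

namespace IsMatchingLabelling

variable {E : Finset ε} {ends : ε → Finset α} {label : ε → β}

theorem label_ne (hE : IsMatchingLabelling E ends label) {a : α} {e e' : ε}
    (he : e ∈ incidentEdges E ends a) (he' : e' ∈ incidentEdges E ends a) (hee' : e ≠ e') :
    label e ≠ label e' := by
  rw [mem_incidentEdges] at he he'
  exact fun h => disjoint_left.1 (hE.disjoint_of_label_eq e he.1 e' he'.1 hee' h) he.2 he'.2

/-- A path `x - a - b - y` whose three edges carry distinct labels would have symmetric
difference `{x, y}`. -/
theorem card_incidentEdges_le_two (hE : IsMatchingLabelling E ends label) {e : ε} (he : e ∈ E)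
    {a b : α} (hab : a ≠ b) (hends : ends e = {a, b}) (ha : 2 ≤ #(incidentEdges E ends a)) :
    #(incidentEdges E ends b) ≤ 2 := by
  classical
  by_contra! hb
  have hea : e ∈ incidentEdges E ends a := by simp [he, hends]
  have heb : e ∈ incidentEdges E ends b := by simp [he, hends]
  obtain ⟨q, hq, hqe⟩ := exists_mem_ne ha e
  obtain ⟨r₁, hr₁, r₂, hr₂, hr₁₂⟩ : ∃ r₁ ∈ (incidentEdges E ends b).erase e,
      ∃ r₂ ∈ (incidentEdges E ends b).erase e, r₁ ≠ r₂ :=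
    one_lt_card.1 (by rw [card_erase_of_mem heb]; omega)
  rw [mem_erase] at hr₁ hr₂
  obtain ⟨r, ⟨hre, hr⟩, hrq⟩ : ∃ r, (r ≠ e ∧ r ∈ incidentEdges E ends b) ∧ label r ≠ label q := by
    by_cases h : label r₁ = label q
    · exact ⟨r₂, hr₂, fun h₂ => hE.label_ne hr₁.2 hr₂.2 hr₁₂ (h.trans h₂.symm)⟩
    · exact ⟨r₁, hr₁, h⟩
  obtain ⟨hqE, haq⟩ := mem_incidentEdges.1 hq
  obtain ⟨hrE, hbr⟩ := mem_incidentEdges.1 hr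
  obtain ⟨x, hx⟩ := exists_eq_pair_of_card_eq_two (hE.card_ends q hqE) haq
  obtain ⟨y, hy⟩ := exists_eq_pair_of_card_eq_two (hE.card_ends r hrE) hbr
  have h3 := hE.three_le_card_symmDiff q hqE e he r hrE (hE.label_ne hq hea hqe) hrq.symm
    (hE.label_ne heb hr hre.symm)
  rw [hx, hends, hy] at h3
  have := (card_le_card (pair_symmDiff_pair_symmDiff_pair_subset (x := x) (y := y) hab)).trans
    card_le_two
  omega

theorem one_le_inv_add_inv (hE : IsMatchingLabelling E ends label) {e : ε} (he : e ∈ E)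
    {a b : α} (hab : a ≠ b) (hends : ends e = {a, b}) :
    1 ≤ (#(incidentEdges E ends a) : ℚ)⁻¹ + (#(incidentEdges E ends b) : ℚ)⁻¹ := by
  have hda : 1 ≤ #(incidentEdges E ends a) := card_pos.2 ⟨e, by simp [he, hends]⟩
  have hdb : 1 ≤ #(incidentEdges E ends b) := card_pos.2 ⟨e, by simp [he, hends]⟩
  have hab' := hE.card_incidentEdges_le_two he hab hends
  have hba' := hE.card_incidentEdges_le_two he hab.symm (by rw [hends, pair_comm])
  rcases (by omega : #(incidentEdges E ends a) = 1 ∨ #(incidentEdges E ends b) = 1 ∨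
      (#(incidentEdges E ends a) = 2 ∧ #(incidentEdges E ends b) = 2)) with h | h | ⟨h, h'⟩
  · rw [h, Nat.cast_one, inv_one, le_add_iff_nonneg_right]
    positivity
  · rw [h, Nat.cast_one, inv_one, le_add_iff_nonneg_left]
    positivity
  · rw [h, h']
    norm_num

theorem card_le_card_biUnion (hE : IsMatchingLabelling E ends label) :
    #E ≤ #(E.biUnion ends) := by
  have hedges : (#E : ℚ) ≤ ∑ e ∈ E, ∑ a ∈ ends e, (#(incidentEdges E ends a) : ℚ)⁻¹ := by
    rw [card_eq_sum_ones, Nat.cast_sum]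
    refine sum_le_sum fun e he => ?_
    obtain ⟨a, b, hab, hends⟩ := card_eq_two.1 (hE.card_ends e he)
    rw [hends, sum_pair hab, Nat.cast_one]
    exact hE.one_le_inv_add_inv he hab hends
  have hvertices : ∑ a ∈ E.biUnion ends,
      #(incidentEdges E ends a) • (#(incidentEdges E ends a) : ℚ)⁻¹ = #(E.biUnion ends) := by
    rw [card_eq_sum_ones, Nat.cast_sum]
    refine sum_congr rfl fun a ha => ?_
    obtain ⟨e, he, hae⟩ := mem_biUnion.1 ha
    have hdeg : (#(incidentEdges E ends a) : ℚ) ≠ 0 :=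
      Nat.cast_ne_zero.2 (card_ne_zero_of_mem (mem_incidentEdges.2 ⟨he, hae⟩))
    rw [nsmul_eq_mul, mul_inv_cancel₀ hdeg, Nat.cast_one]
  rw [sum_sum_ends_eq_sum_card_incidentEdges_nsmul, hvertices] at hedges
  exact_mod_cast hedges

end IsMatchingLabelling

end Graph

section CosetLeader

variable {ι M : Type*}

/-- Identifying a vector of `F₂^ι` with its support: a minimal-weight vector in its coset of the
dual of the code whose parity-check columns are the `v i`. -/
def IsCosetLeader [AddCommMonoid M] (v : ι → M) (S : Finset ι) : Prop :=
  ∀ T : Finset ι, ∑ i ∈ T, v i = ∑ i ∈ S, v i → #S ≤ #T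

theorem exists_isCosetLeader [AddCommMonoid M] (v : ι → M) (T : Finset ι) :
    ∃ S, ∑ i ∈ S, v i = ∑ i ∈ T, v i ∧ IsCosetLeader v S := by
  obtain ⟨S, hS, hmin⟩ := (measure card).wf.has_min {S | ∑ i ∈ S, v i = ∑ i ∈ T, v i} ⟨T, rfl⟩
  exact ⟨S, hS, fun T' hT' => not_lt.1 (hmin T' (hT'.trans hS))⟩

namespace IsCosetLeader

variable [DecidableEq ι] {v : ι → M} {S : Finset ι}

theorem card_le_card_of_sum_eq [AddCommMonoid M] (hS : IsCosetLeader v S) {A D : Finset ι}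
    (hA : A ⊆ S) (hD : Disjoint D S) (h : ∑ i ∈ A, v i = ∑ i ∈ D, v i) : #A ≤ #D := by
  have hdisj : Disjoint (S \ A) D := disjoint_of_subset_left sdiff_subset hD.symm
  have hexch := hS (S \ A ∪ D) (by rw [sum_union hdisj, ← h, sum_sdiff hA])
  rw [card_union_of_disjoint hdisj, card_sdiff_of_subset hA] at hexch
  have := card_le_card hA
  omega

theorem ne_zero [AddCommMonoid M] (hS : IsCosetLeader v S) {i : ι} (hi : i ∈ S) : v i ≠ 0 := by
  intro h
  have := hS.card_le_card_of_sum_eq (singleton_subset_iff.2 hi) (disjoint_empty_left S)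
    (by rw [sum_singleton, sum_empty, h])
  simp at this

variable [AddCommGroup M] [Module (ZMod 2) M]

theorem two_mul_card_inter_le (hS : IsCosetLeader v S) {T : Finset ι}
    (hT : ∑ i ∈ T, v i = 0) : 2 * #(S ∩ T) ≤ #T := by
  have hsplit := sum_inter_add_sum_sdiff T S v
  rw [hT, add_eq_zero_iff_eq_neg, ZModModule.neg_eq_self, inter_comm] at hsplit
  have := hS.card_le_card_of_sum_eq inter_subset_left sdiff_disjoint hsplit
  have := card_sdiff_add_card_inter T S
  rw [inter_comm] at this
  omega

theorem disjoint_of_sum_eq (hS : IsCosetLeader v S) {i : ι} (hi : i ∈ S) {p : Finset ι}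
    (hp : #p = 2) (hip : i ∉ p) (hsum : ∑ j ∈ p, v j = v i) : Disjoint p S := by
  refine disjoint_left.2 fun t htp htS => ?_
  have hT := hS.two_mul_card_inter_le (T := insert i p)
    (by rw [sum_insert hip, hsum, ZModModule.add_self])
  have hit : #{i, t} ≤ #(S ∩ insert i p) :=
    card_le_card (by simp [insert_subset_iff, hi, htS, htp])
  rw [card_insert_of_notMem hip, hp, card_pair (ne_of_mem_of_not_mem htp hip).symm] at *
  omega

theorem three_le_card_symmDiff (hS : IsCosetLeader v S) {i j k : ι} (hi : i ∈ S) (hj : j ∈ S)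
    (hk : k ∈ S) (hij : i ≠ j) (hik : i ≠ k) (hjk : j ≠ k) {p q r : Finset ι}
    (hp : Disjoint p S) (hq : Disjoint q S) (hr : Disjoint r S) (hpi : ∑ t ∈ p, v t = v i)
    (hqj : ∑ t ∈ q, v t = v j) (hrk : ∑ t ∈ r, v t = v k) : 3 ≤ #(p ∆ q ∆ r) := by
  rw [← card_eq_three.2 ⟨i, j, k, hij, hik, hjk, rfl⟩]
  have hpq : Disjoint (p ∆ q) S := (disjoint_sup_left.2 ⟨hp, hq⟩).mono_left symmDiff_le_sup
  refine hS.card_le_card_of_sum_eq (by simp [insert_subset_iff, hi, hj, hk])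
    ((disjoint_sup_left.2 ⟨hpq, hr⟩).mono_left symmDiff_le_sup) ?_
  rw [sum_symmDiff_eq_add, sum_symmDiff_eq_add, hpi, hqj, hrk, sum_insert (by simp [hij, hik]),
    sum_pair hjk, add_assoc]

theorem isMatchingLabelling_sigma (hS : IsCosetLeader v S) {P : ι → Finset (Finset ι)}
    (hPdisj : ∀ i ∈ S, (P i : Set (Finset ι)).PairwiseDisjoint id)
    (hP : ∀ i ∈ S, ∀ p ∈ P i, #p = 2 ∧ i ∉ p ∧ ∑ j ∈ p, v j = v i) :
    IsMatchingLabelling (S.sigma P) Sigma.snd Sigma.fst := by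
  refine ⟨fun e he => (hP e.1 (mem_sigma.1 he).1 e.2 (mem_sigma.1 he).2).1, ?_, ?_⟩
  · rintro ⟨i, p⟩ he ⟨j, q⟩ he' hne (rfl : i = j)
    rw [mem_sigma] at he he'
    exact hPdisj i he.1 he.2 he'.2 fun h : p = q => hne (h ▸ rfl)
  · rintro ⟨i, p⟩ he₁ ⟨j, q⟩ he₂ ⟨k, r⟩ he₃ hij hik hjk
    rw [mem_sigma] at he₁ he₂ he₃
    obtain ⟨hp, hip, hpi⟩ := hP i he₁.1 p he₁.2
    obtain ⟨hq, hjq, hqj⟩ := hP j he₂.1 q he₂.2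
    obtain ⟨hr, hkr, hrk⟩ := hP k he₃.1 r he₃.2
    exact hS.three_le_card_symmDiff he₁.1 he₂.1 he₃.1 hij hik hjk
      (hS.disjoint_of_sum_eq he₁.1 hp hip hpi) (hS.disjoint_of_sum_eq he₂.1 hq hjq hqj)
      (hS.disjoint_of_sum_eq he₃.1 hr hkr hrk) hpi hqj hrk

theorem succ_mul_card_le [Fintype ι] (hS : IsCosetLeader v S) (K : ℕ)
    (hpairs : ∀ i, v i ≠ 0 → ∃ P : Finset (Finset ι), K ≤ #P ∧
      (P : Set (Finset ι)).PairwiseDisjoint id ∧ ∀ p ∈ P, #p = 2 ∧ i ∉ p ∧ ∑ j ∈ p, v j = v i) :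
    (K + 1) * #S ≤ Fintype.card ι := by
  choose! P hPK hPdisj hP using fun i (hi : i ∈ S) => hpairs i (hS.ne_zero hi)
  have hedges : K * #S ≤ #(S.sigma P) := by
    rw [card_sigma, mul_comm, ← smul_eq_mul, ← sum_const]
    exact sum_le_sum hPK
  have hvertices : #((S.sigma P).biUnion Sigma.snd) ≤ #(univ \ S) := by
    refine card_le_card fun a ha => ?_
    obtain ⟨⟨i, p⟩, he, hap⟩ := mem_biUnion.1 ha
    rw [mem_sigma] at he
    obtain ⟨hp, hip, hpi⟩ := hP i he.1 p he.2
    exact mem_sdiff.2 ⟨mem_univ a, disjoint_left.1 (hS.disjoint_of_sum_eq he.1 hp hip hpi) hap⟩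
  have := (hS.isMatchingLabelling_sigma hPdisj hP).card_le_card_biUnion
  rw [card_sdiff_of_subset (subset_univ S), card_univ] at hvertices
  have := card_le_univ S
  rw [add_one_mul]
  omega

end IsCosetLeader

end CosetLeader

theorem mem_dualSet_span {n : ℕ} {s : Set (Fin n → ZMod 2)} {y : Fin n → ZMod 2}
    (hy : y ∈ dualSet s) : y ∈ dualSet (Submodule.span (ZMod 2) s : Set (Fin n → ZMod 2)) := by
  intro u hu
  change u ⬝ᵥ y = 0
  induction hu using Submodule.span_induction with
  | mem u hu => exact hy u hu
  | zero => exact zero_dotProduct y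
  | add a b _ _ ha hb => rw [add_dotProduct, ha, hb, add_zero]
  | smul c a _ ha => rw [smul_dotProduct, ha, smul_zero]

theorem main_lemma_covering_radius_general
    (m n K : ℕ)
    (G : Fin m → Fin n → ZMod 2)
    (v : Fin n → Fin m → ZMod 2) (hv : ∀ i r, v i r = G r i)
    (V : Submodule (ZMod 2) (Fin n → ZMod 2))
    (hV : V = Submodule.span (ZMod 2) (Set.range G))
    (hpairs : ∀ i : Fin n, v i ≠ 0 →
      ∃ P : Finset (Finset (Fin n)),
        K ≤ P.card ∧
        (P : Set (Finset (Fin n))).PairwiseDisjoint id ∧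
        ∀ s ∈ P, ∃ j l : Fin n, j ≠ l ∧ s = {j, l} ∧ i ∉ s ∧ v i = v j + v l) :
    ∀ x : Fin n → ZMod 2, ∃ z : Fin n → ZMod 2,
      z - x ∈ dualSet (V : Set (Fin n → ZMod 2)) ∧
      (hammingNorm z : ℝ) ≤ (n : ℝ) / (K + 1) := by
  intro x
  obtain ⟨S, hSx, hS⟩ := exists_isCosetLeader v {i | x i ≠ 0}
  set z : Fin n → ZMod 2 := fun i => if i ∈ S then 1 else 0
  have hz : ({i | z i ≠ 0} : Finset (Fin n)) = S := by ext i; simp [z]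
  refine ⟨z, ?_, ?_⟩
  · have hsyndrome : ∑ i, (z - x) i • v i = 0 := by
      simp only [Pi.sub_apply, sub_smul, sum_sub_distrib, sum_smul_eq_sum_filter_ne_zero, hz,
        hSx, sub_self]
    rw [hV]
    refine mem_dualSet_span ?_
    rintro _ ⟨r, rfl⟩
    simpa [← hv, mul_comm] using congrFun hsyndrome r
  · have hcard := hS.succ_mul_card_le K fun i hi => (hpairs i hi).imp fun P ⟨hK, hdisj, hP⟩ =>
      ⟨hK, hdisj, fun p hp => by
        obtain ⟨j, l, hjl, rfl, hip, hvi⟩ := hP p hp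
        exact ⟨card_pair hjl, hip, by rw [sum_pair hjl, hvi]⟩⟩
    rw [hammingNorm, hz, le_div_iff₀ (by positivity), mul_comm]
    exact_mod_cast (by simpa using hcard : (K + 1) * #S ≤ n)

/-- Main Lemma (diameter/covering radius form): if every nonzero column of `G` has at
least `K` pairwise disjoint representations as a sum of two other columns, then every
coset of `V^⊥` contains a vector of Hamming weight at most `n / (K+1)`. -/
theorem main_lemma_covering_radius
    (m n K : ℕ) (hK : 1 ≤ K)
    (G : Fin m → Fin n → ZMod 2)
    (v : Fin n → Fin m → ZMod 2) (hv : ∀ i r, v i r = G r i)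
    (V : Submodule (ZMod 2) (Fin n → ZMod 2))
    (hV : V = Submodule.span (ZMod 2) (Set.range G))
    (hpairs : ∀ i : Fin n, v i ≠ 0 →
      ∃ P : Finset (Finset (Fin n)),
        K ≤ P.card ∧
        (P : Set (Finset (Fin n))).PairwiseDisjoint id ∧
        ∀ s ∈ P, ∃ j l : Fin n, j ≠ l ∧ s = {j, l} ∧ i ∉ s ∧ v i = v j + v l) :
    ∀ x : Fin n → ZMod 2, ∃ z : Fin n → ZMod 2,
      z - x ∈ dualSet (V : Set (Fin n → ZMod 2)) ∧
      (hammingNorm z : ℝ) ≤ (n : ℝ) / (K + 1) :=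
  main_lemma_covering_radius_general m n K G v hv V hV hpairs
end

section
/- Let q > 2 be an integer, 0 < δ < 1/q a real, and n ≥ 2. Let N ⊆ {1,…,n}, and for each i ∈ N let Mᵢ be a family of at least δn pairwise disjoint q-element subsets of {1,…,n}∖{i}. Then for every real a with 1 ≤ a ≤ (log₂ n)^{1/(q−1)} there exists a subset B ⊆ {1,…,n} such that: (1) |B| ≤ (a + 4/(δ·a^{q−2}))·n^{(q−2)/(q−1)}, and (2) for every i ∈ N∖B, the number of sets α ∈ Mᵢ with |α∖B| ≤ 2 is at least (δ/2)·a^{q−2}·n^{1/(q−1)}. -/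
/-!
Let `B` be a random subset of `{1,…,n}` containing each point independently with probability
`p = a n^{-1/(q-1)}`. For each `α ∈ Mᵢ`, fix a `(q-2)`-subset of `α`; the number `Yᵢ` of these
subsets covered by `B` is a lower bound for the number of `α ∈ Mᵢ` with `|α \ B| ≤ 2`. The
subsets are disjoint, so the events are independent, `Var Yᵢ ≤ 𝔼 Yᵢ = |Mᵢ| p^{q-2}`, and Chebyshev
bounds `ℙ(Yᵢ < 𝔼 Yᵢ / 2)` by `4 / 𝔼 Yᵢ`. So the expected value of `|B|` plus the number of
`i ∈ N` with fewer than `δ n p^{q-2} / 2` such `α` is at most `np + 4/(δ p^{q-2})`; fixing an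
outcome below this mean and adding those `i` to `B` gives the set.
-/

open Finset

namespace RandomSubset

variable {α : Type*} [Fintype α] [DecidableEq α]

/-- The probability that the random subset of `α` containing each element independently with
probability `p` is exactly `B`. -/
def weight (p : ℝ) (B : Finset α) : ℝ := p ^ #B * (1 - p) ^ #Bᶜ

def expect (p : ℝ) (f : Finset α → ℝ) : ℝ := ∑ B, weight p B * f B

variable {p : ℝ}

lemma weight_nonneg (hp0 : 0 ≤ p) (hp1 : p ≤ 1) (B : Finset α) : 0 ≤ weight p B := by
  unfold weight
  have : 0 ≤ 1 - p := by linarith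
  positivity

lemma expect_add (f g : Finset α → ℝ) :
    expect p (fun B => f B + g B) = expect p f + expect p g := by
  simp only [expect, mul_add, sum_add_distrib]

lemma expect_const_mul (c : ℝ) (f : Finset α → ℝ) :
    expect p (fun B => c * f B) = c * expect p f := by
  simp only [expect, mul_sum]
  exact sum_congr rfl fun B _ => mul_left_comm _ _ _

lemma expect_sum {ι : Type*} (s : Finset ι) (f : ι → Finset α → ℝ) :
    expect p (fun B => ∑ i ∈ s, f i B) = ∑ i ∈ s, expect p (f i) := by
  simp only [expect, mul_sum]
  exact sum_comm

lemma expect_mono (hp0 : 0 ≤ p) (hp1 : p ≤ 1) {f g : Finset α → ℝ} (hfg : ∀ B, f B ≤ g B) :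
    expect p f ≤ expect p g :=
  sum_le_sum fun B _ => mul_le_mul_of_nonneg_left (hfg B) (weight_nonneg hp0 hp1 B)

lemma expect_indicator_subset (p : ℝ) (S : Finset α) :
    expect p (fun B => if S ⊆ B then 1 else 0) = p ^ #S := by
  set g : α → ℝ := fun x => if x ∈ S then 0 else 1 - p
  have hterm : ∀ B : Finset α, weight p B * (if S ⊆ B then 1 else 0)
      = (∏ _x ∈ B, p) * ∏ x ∈ univ \ B, g x := by
    intro B
    rw [weight, prod_const, ← compl_eq_univ_sdiff]
    split_ifs with hSB
    · rw [mul_one, ← prod_const (s := Bᶜ)]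
      refine congrArg _ (prod_congr rfl fun x hx => ?_)
      simp only [g, if_neg fun hxS => mem_compl.1 hx (hSB hxS)]
    · obtain ⟨x, hxS, hxB⟩ := not_subset.1 hSB
      rw [mul_zero, prod_eq_zero (f := g) (mem_compl.2 hxB) (if_pos hxS), mul_zero]
  calc expect p (fun B => if S ⊆ B then 1 else 0)
      = ∏ x, (p + g x) := by
        rw [expect, prod_add, powerset_univ]
        exact sum_congr rfl fun B _ => hterm B
    _ = ∏ x, if x ∈ S then p else 1 := by
        refine prod_congr rfl fun x _ => ?_
        simp only [g]
        split_ifs <;> ring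
    _ = p ^ #S := by rw [prod_ite_mem, univ_inter, prod_const]

lemma expect_const (p c : ℝ) : expect p (fun _ : Finset α => c) = c := by
  have h1 : expect p (fun _ : Finset α => (1 : ℝ)) = 1 := by
    simpa using expect_indicator_subset (α := α) p ∅
  simpa [h1] using expect_const_mul (p := p) c fun _ : Finset α => (1 : ℝ)

lemma expect_card (p : ℝ) : expect p (fun B : Finset α => (#B : ℝ)) = Fintype.card α * p := by
  have hcard : ∀ B : Finset α, (#B : ℝ) = ∑ x, if {x} ⊆ B then 1 else 0 := by
    intro B
    simp only [singleton_subset_iff, sum_ite_mem, univ_inter, sum_const, nsmul_eq_mul, mul_one]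
  simp_rw [hcard, expect_sum, expect_indicator_subset, card_singleton, pow_one, sum_const,
    card_univ, nsmul_eq_mul]

lemma exists_le_expect (hp0 : 0 ≤ p) (hp1 : p ≤ 1) (f : Finset α → ℝ) :
    ∃ B, f B ≤ expect p f := by
  obtain ⟨B, -, hB⟩ := exists_min_image univ f univ_nonempty
  exact ⟨B, (expect_const p (f B)).symm.le.trans
    (expect_mono hp0 hp1 fun B' => hB B' (mem_univ _))⟩

lemma expect_indicator_lt_half_le (hp0 : 0 ≤ p) (hp1 : p ≤ 1) {f : Finset α → ℝ} {c : ℝ}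
    (hc : 0 < c) (hmean : expect p f = c) (hsq : expect p (fun B => f B ^ 2) ≤ c + c ^ 2) :
    expect p (fun B => if f B < c / 2 then 1 else 0) ≤ 4 / c := by
  have hpt : ∀ B, (if f B < c / 2 then (1 : ℝ) else 0)
      ≤ 4 / c ^ 2 * (f B ^ 2 + (-2 * c) * f B + c ^ 2) := by
    intro B
    split_ifs with hB
    · rw [div_mul_eq_mul_div, le_div_iff₀ (by positivity)]
      nlinarith
    · have : 0 ≤ f B ^ 2 + (-2 * c) * f B + c ^ 2 := by nlinarith [sq_nonneg (f B - c)]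
      positivity
  calc expect p (fun B => if f B < c / 2 then 1 else 0)
      ≤ expect p (fun B => 4 / c ^ 2 * (f B ^ 2 + (-2 * c) * f B + c ^ 2)) :=
        expect_mono hp0 hp1 hpt
    _ = 4 / c ^ 2 * (expect p (fun B => f B ^ 2) - c ^ 2) := by
        rw [expect_const_mul, expect_add, expect_add, expect_const_mul, expect_const, hmean]
        ring
    _ ≤ 4 / c ^ 2 * c := by gcongr; linarith
    _ = 4 / c := by field_simp

section Indicators

variable {ι : Type*} {s : ℕ} (A : Finset ι) (T : ι → Finset α)

lemma expect_sum_indicator (hcard : ∀ i ∈ A, #(T i) = s) :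
    expect p (fun B => ∑ i ∈ A, if T i ⊆ B then 1 else 0) = #A * p ^ s := by
  rw [expect_sum, sum_congr rfl fun i hi => by rw [expect_indicator_subset, hcard i hi],
    sum_const, nsmul_eq_mul]

lemma expect_sq_sum_indicator_le [DecidableEq ι] (hdisj : (A : Set ι).PairwiseDisjoint T)
    (hcard : ∀ i ∈ A, #(T i) = s) :
    expect p (fun B => (∑ i ∈ A, if T i ⊆ B then 1 else 0) ^ 2)
      ≤ #A * p ^ s + (#A * p ^ s) ^ 2 := by
  have hsq : ∀ B, (∑ i ∈ A, if T i ⊆ B then (1 : ℝ) else 0) ^ 2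
      = ∑ i ∈ A, ∑ j ∈ A, if T i ∪ T j ⊆ B then 1 else 0 := by
    intro B
    simp only [sq, sum_mul_sum, ite_zero_mul_ite_zero, one_mul, union_subset_iff]
  have hpair : ∀ i ∈ A, ∀ j ∈ A,
      p ^ #(T i ∪ T j) ≤ (if i = j then p ^ s else 0) + p ^ s * p ^ s := by
    intro i hi j hj
    by_cases hij : i = j
    · subst hij
      rw [if_pos rfl, union_self, hcard i hi, le_add_iff_nonneg_right]
      exact mul_self_nonneg _
    · rw [if_neg hij, zero_add, card_union_of_disjoint (hdisj hi hj hij), hcard i hi,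
        hcard j hj, pow_add]
  calc expect p (fun B => (∑ i ∈ A, if T i ⊆ B then 1 else 0) ^ 2)
      = ∑ i ∈ A, ∑ j ∈ A, p ^ #(T i ∪ T j) := by
        simp only [hsq, expect_sum, expect_indicator_subset]
    _ ≤ ∑ i ∈ A, ∑ j ∈ A, ((if i = j then p ^ s else 0) + p ^ s * p ^ s) :=
        sum_le_sum fun i hi => sum_le_sum fun j hj => hpair i hi j hj
    _ = #A * p ^ s + (#A * p ^ s) ^ 2 := by
        simp only [sum_add_distrib, sum_ite_eq, sum_ite_mem, inter_self, sum_const, nsmul_eq_mul]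
        ring

end Indicators

lemma expect_card_filter_lt_le (hp0 : 0 ≤ p) (hp1 : p ≤ 1) {s k : ℕ} (A : Finset (Finset α))
    (hdisj : (A : Set (Finset α)).PairwiseDisjoint id) (hcard : ∀ t ∈ A, #t = s + k)
    (hpos : 0 < #A * p ^ s) :
    expect p (fun B => if (#{t ∈ A | #(t \ B) ≤ k} : ℝ) < #A * p ^ s / 2 then 1 else 0)
      ≤ 4 / (#A * p ^ s) := by
  choose! T hTt hTcard using fun t ht => exists_subset_card_eq (s := t) (n := s)
    (by rw [hcard t ht]; omega)
  set Y : Finset α → ℝ := fun B => ∑ t ∈ A, if T t ⊆ B then 1 else 0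
  have hY : ∀ B, Y B ≤ #{t ∈ A | #(t \ B) ≤ k} := by
    intro B
    simp only [Y, sum_boole, Nat.cast_le]
    refine card_le_card (monotone_filter_right _ fun t ht hTB => ?_)
    calc #(t \ B) ≤ #(t \ T t) := card_le_card (sdiff_subset_sdiff subset_rfl hTB)
      _ = k := by rw [card_sdiff_of_subset (hTt t ht), hTcard t ht, hcard t ht]; omega
  calc expect p (fun B => if (#{t ∈ A | #(t \ B) ≤ k} : ℝ) < #A * p ^ s / 2 then 1 else 0)
      ≤ expect p (fun B => if Y B < #A * p ^ s / 2 then 1 else 0) := by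
        refine expect_mono hp0 hp1 fun B => ?_
        split_ifs <;> linarith [hY B]
    _ ≤ 4 / (#A * p ^ s) :=
        expect_indicator_lt_half_le hp0 hp1 hpos (expect_sum_indicator A T hTcard)
          (expect_sq_sum_indicator_le A T (hdisj.mono_on hTt) hTcard)

theorem exists_card_le_and_card_filter_card_sdiff_le (hp0 : 0 < p) (hp1 : p ≤ 1) {s k : ℕ}
    {δ : ℝ} (hδ : 0 < δ) (N : Finset α) (M : α → Finset (Finset α))
    (hMcard : ∀ i ∈ N, δ * Fintype.card α ≤ #(M i))
    (hMdisj : ∀ i ∈ N, (M i : Set (Finset α)).PairwiseDisjoint id)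
    (hMsize : ∀ i ∈ N, ∀ t ∈ M i, #t = s + k) :
    ∃ B : Finset α, (#B : ℝ) ≤ Fintype.card α * p + 4 / (δ * p ^ s) ∧
      ∀ i ∈ N, i ∉ B → δ * Fintype.card α * p ^ s / 2 ≤ #{t ∈ M i | #(t \ B) ≤ k} := by
  set n : ℝ := (Fintype.card α : ℝ)
  set μ : ℝ := δ * n * p ^ s
  set count : α → Finset α → ℝ := fun i B => #{t ∈ M i | #(t \ B) ≤ k}
  set bad : Finset α → Finset α := fun B => {i ∈ N | count i B < μ / 2}
  have hbad : ∀ i ∈ N, expect p (fun B => if count i B < μ / 2 then 1 else 0) ≤ 4 / μ := by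
    intro i hi
    have hμ : 0 < μ := by
      have : (0 : ℝ) < n := by simpa [n] using Fintype.card_pos_iff.2 ⟨i⟩
      positivity
    have hμi : μ ≤ #(M i) * p ^ s := mul_le_mul_of_nonneg_right (hMcard i hi) (by positivity)
    calc expect p (fun B => if count i B < μ / 2 then 1 else 0)
        ≤ expect p (fun B => if count i B < #(M i) * p ^ s / 2 then 1 else 0) := by
          refine expect_mono hp0.le hp1 fun B => ?_
          split_ifs <;> linarith
      _ ≤ 4 / (#(M i) * p ^ s) :=
          expect_card_filter_lt_le hp0.le hp1 (M i) (hMdisj i hi) (hMsize i hi)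
            (hμ.trans_le hμi)
      _ ≤ 4 / μ := by gcongr
  have hN : (#N : ℝ) * (4 / μ) ≤ 4 / (δ * p ^ s) := by
    calc (#N : ℝ) * (4 / μ) = #N / n * (4 / (δ * p ^ s)) := by ring
      _ ≤ 1 * (4 / (δ * p ^ s)) := by
          gcongr
          exact div_le_one_of_le₀ (by simp only [n]; exact_mod_cast card_le_univ N)
            (by positivity)
      _ = 4 / (δ * p ^ s) := one_mul _
  have hexpect : expect p (fun B => (#B : ℝ) + #(bad B)) ≤ n * p + 4 / (δ * p ^ s) := by
    simp only [bad, card_filter, Nat.cast_sum, Nat.cast_ite, Nat.cast_one, Nat.cast_zero]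
    rw [expect_add, expect_card, expect_sum]
    have := sum_le_sum hbad
    rw [sum_const, nsmul_eq_mul] at this
    linarith
  obtain ⟨B₀, hB₀⟩ := exists_le_expect hp0.le hp1 fun B => (#B : ℝ) + #(bad B)
  refine ⟨B₀ ∪ bad B₀, ?_, fun i hi hiB => ?_⟩
  · calc (#(B₀ ∪ bad B₀) : ℝ) ≤ #B₀ + #(bad B₀) := by exact_mod_cast card_union_le _ _
      _ ≤ n * p + 4 / (δ * p ^ s) := hB₀.trans hexpect
  · have hgood : μ / 2 ≤ count i B₀ := by
      by_contra h
      exact hiB (mem_union_right _ (mem_filter.2 ⟨hi, not_le.1 h⟩))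
    refine hgood.trans ?_
    simp only [count, Nat.cast_le]
    exact card_le_card (monotone_filter_right _ fun t _ ht =>
      (card_le_card (sdiff_subset_sdiff subset_rfl subset_union_left)).trans ht)

end RandomSubset

namespace Real

lemma logb_two_natCast_nonneg (n : ℕ) : 0 ≤ logb 2 n :=
  div_nonneg (log_natCast_nonneg n) (log_nonneg one_le_two)

lemma logb_two_natCast_le (n : ℕ) : logb 2 n ≤ n := by
  rcases Nat.eq_zero_or_pos n with rfl | hn
  · simp
  rw [logb_le_iff_le_rpow one_lt_two (by exact_mod_cast hn), rpow_natCast]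
  exact_mod_cast (Nat.lt_two_pow_self).le

end Real

theorem random_subset_lemma_general
    (n q : ℕ) (hq : 2 < q)
    (δ : ℝ) (hδ0 : 0 < δ)
    (N : Finset (Fin n)) (M : Fin n → Finset (Finset (Fin n)))
    (hMcard : ∀ i ∈ N, δ * n ≤ ((M i).card : ℝ))
    (hMdisj : ∀ i ∈ N, ((M i : Set (Finset (Fin n))).PairwiseDisjoint id))
    (hMq : ∀ i ∈ N, ∀ α ∈ M i, α.card = q ∧ i ∉ α) :
    ∀ a : ℝ, 1 ≤ a → a ≤ (Real.logb 2 (n : ℝ)) ^ ((1 : ℝ) / ((q : ℝ) - 1)) →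
      ∃ B : Finset (Fin n),
        ((B.card : ℝ) ≤ (a + 4 / (δ * a ^ ((q : ℝ) - 2))) *
          (n : ℝ) ^ (((q : ℝ) - 2) / ((q : ℝ) - 1))) ∧
        ∀ i ∈ N, i ∉ B →
          δ / 2 * a ^ ((q : ℝ) - 2) * (n : ℝ) ^ ((1 : ℝ) / ((q : ℝ) - 1)) ≤
            ((((M i).filter (fun α => (α \ B).card ≤ 2)).card : ℕ) : ℝ) := by
  intro a ha1 ha2
  obtain ⟨s, rfl⟩ : ∃ s, q = s + 2 := ⟨q - 2, by omega⟩
  have hq1 : ((s + 2 : ℕ) : ℝ) - 1 = ((s + 1 : ℕ) : ℝ) := by push_cast; ring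
  have hq2 : ((s + 2 : ℕ) : ℝ) - 2 = (s : ℝ) := by push_cast; ring
  rw [hq1] at ha2 ⊢
  rw [hq2, Real.rpow_natCast, div_eq_mul_one_div (s : ℝ), mul_comm (s : ℝ),
    Real.rpow_mul (Nat.cast_nonneg n), Real.rpow_natCast]
  set x := (n : ℝ) ^ ((1 : ℝ) / ((s + 1 : ℕ) : ℝ))
  have hxn : x ^ (s + 1) = n := by
    simpa only [x, one_div] using
      Real.rpow_inv_natCast_pow (Nat.cast_nonneg n) (Nat.succ_ne_zero s)
  have hax : a ≤ x := ha2.trans <| Real.rpow_le_rpow (Real.logb_two_natCast_nonneg n)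
    (Real.logb_two_natCast_le n) (by positivity)
  have hx0 : 0 < x := by linarith
  have ha0 : 0 < a := by linarith
  obtain ⟨B, hBcard, hBcount⟩ :=
    RandomSubset.exists_card_le_and_card_filter_card_sdiff_le (p := a / x) (k := 2)
      (by positivity) ((div_le_one hx0).2 hax) hδ0 N M (by simpa using hMcard) hMdisj
      fun i hi t ht => (hMq i hi t ht).1
  rw [Fintype.card_fin, ← hxn] at hBcard hBcount
  refine ⟨B, ?_, fun i hi hiB => ?_⟩
  · convert hBcard using 1
    rw [div_pow]
    field_simp
    ring
  · convert hBcount i hi hiB using 1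
    rw [div_pow]
    field_simp
    ring

/-- The random-set lemma: given, for each `i ∈ N`, a family `Mᵢ` of at least `δn`
pairwise disjoint `q`-element subsets of `{1,…,n}∖{i}`, for every `1 ≤ a ≤ (log₂ n)^{1/(q-1)}`
there is a set `B` of size at most `(a + 4/(δ a^{q-2}))·n^{(q-2)/(q-1)}` such that for every
`i ∈ N∖B` at least `(δ/2)·a^{q-2}·n^{1/(q-1)}` of the sets `α ∈ Mᵢ` satisfy `|α∖B| ≤ 2`. -/
theorem random_subset_lemma
    (n q : ℕ) (hn : 2 ≤ n) (hq : 2 < q)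
    (δ : ℝ) (hδ0 : 0 < δ) (hδ1 : δ < 1 / (q : ℝ))
    (N : Finset (Fin n)) (M : Fin n → Finset (Finset (Fin n)))
    (hMcard : ∀ i ∈ N, δ * n ≤ ((M i).card : ℝ))
    (hMdisj : ∀ i ∈ N, ((M i : Set (Finset (Fin n))).PairwiseDisjoint id))
    (hMq : ∀ i ∈ N, ∀ α ∈ M i, α.card = q ∧ i ∉ α) :
    ∀ a : ℝ, 1 ≤ a → a ≤ (Real.logb 2 (n : ℝ)) ^ ((1 : ℝ) / ((q : ℝ) - 1)) →
      ∃ B : Finset (Fin n),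
        ((B.card : ℝ) ≤ (a + 4 / (δ * a ^ ((q : ℝ) - 2))) *
          (n : ℝ) ^ (((q : ℝ) - 2) / ((q : ℝ) - 1))) ∧
        ∀ i ∈ N, i ∉ B →
          δ / 2 * a ^ ((q : ℝ) - 2) * (n : ℝ) ^ ((1 : ℝ) / ((q : ℝ) - 1)) ≤
            ((((M i).filter (fun α => (α \ B).card ≤ 2)).card : ℕ) : ℝ) :=
  random_subset_lemma_general n q hq δ hδ0 N M hMcard hMdisj hMq
end

section
/- Let C ⊆ F₂ⁿ be a linear code, q ≥ 2 and K ≥ 1 integers, and let N = {i ∈ {1,…,n} : eᵢ ∉ C^⊥}. For each i ∈ N let Mᵢ be a family of pairwise disjoint q-element subsets α of {1,…,n}∖{i} such that eᵢ + Σ_{j∈α} eⱼ ∈ C^⊥ for every α ∈ Mᵢ. Let B ⊆ {1,…,n} be a set such that for every i ∈ N∖B the number of α ∈ Mᵢ with |α∖B| ≤ 2 is at least K, and let C_B = {c ∈ C : cᵢ = 0 for all i ∈ B}. Then for any matrix whose rows span C_B, with columns u₁,…,uₙ, the following holds: for every index i with uᵢ ≠ 0 there exist at least K pairwise disjoint two-element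 sets {j,l} ⊆ {1,…,n}∖{i} with uᵢ = uⱼ + uₗ. -/
/-- Contracting by `B`: the columns of any generating matrix of the subcode
`C_B = {c ∈ C : c|_B = 0}` satisfy the disjoint-pairs condition with parameter `K`. -/
theorem contraction_gives_disjoint_pairs
    (n m q K : ℕ) (hq : 2 ≤ q) (hK : 1 ≤ K)
    (C : Submodule (ZMod 2) (Fin n → ZMod 2))
    (N : Finset (Fin n))
    (hN : ∀ i : Fin n, i ∈ N ↔ Pi.single i 1 ∉ dualSet (C : Set (Fin n → ZMod 2)))
    (M : Fin n → Finset (Finset (Fin n)))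
    (hMdisj : ∀ i ∈ N, ((M i : Set (Finset (Fin n))).PairwiseDisjoint id))
    (hMq : ∀ i ∈ N, ∀ α ∈ M i, α.card = q ∧ i ∉ α ∧
      (Pi.single i 1 + ∑ j ∈ α, Pi.single j (1 : ZMod 2)) ∈
        dualSet (C : Set (Fin n → ZMod 2)))
    (B : Finset (Fin n))
    (hB : ∀ i ∈ N, i ∉ B → K ≤ ((M i).filter (fun α => (α \ B).card ≤ 2)).card)
    (CB : Submodule (ZMod 2) (Fin n → ZMod 2))
    (hCB : (CB : Set (Fin n → ZMod 2)) = {c | c ∈ C ∧ ∀ i ∈ B, c i = 0})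
    (H : Fin m → Fin n → ZMod 2)
    (hH : Submodule.span (ZMod 2) (Set.range H) = CB)
    (u : Fin n → Fin m → ZMod 2) (hu : ∀ i r, u i r = H r i) :
    ∀ i : Fin n, u i ≠ 0 →
      ∃ P : Finset (Finset (Fin n)),
        K ≤ P.card ∧
        (P : Set (Finset (Fin n))).PairwiseDisjoint id ∧
        ∀ s ∈ P, ∃ j l : Fin n, j ≠ l ∧ s = {j, l} ∧ i ∉ s ∧ u i = u j + u l := by
  classical
  -- basic facts about members of CB
  have hCBmem : ∀ c ∈ CB, c ∈ C ∧ ∀ j ∈ B, c j = 0 := by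
    intro c hc
    have : c ∈ (CB : Set (Fin n → ZMod 2)) := hc
    rw [hCB] at this
    exact this
  have hrow : ∀ r, H r ∈ CB := by
    intro r
    have : H r ∈ Submodule.span (ZMod 2) (Set.range H) :=
      Submodule.subset_span ⟨r, rfl⟩
    rwa [hH] at this
  -- u vanishes on B
  have huB : ∀ j ∈ B, u j = 0 := by
    intro j hj
    funext r
    have := (hCBmem (H r) (hrow r)).2 j hj
    simp [hu, this]
  intro i hui
  -- get a codeword of CB nonzero at i
  obtain ⟨r₀, hr₀⟩ : ∃ r, u i r ≠ 0 := by
    by_contra h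
    push_neg at h
    exact hui (funext h)
  have hc₀ : H r₀ i ≠ 0 := by rw [← hu]; exact hr₀
  have hiB : i ∉ B := fun h => hc₀ (by rw [← hu]; exact congrFun (huB i h) r₀)
  have hiN : i ∈ N := by
    rw [hN]
    intro hdual
    apply hc₀
    have := hdual (H r₀) (hCBmem (H r₀) (hrow r₀)).1
    simpa [Pi.single_apply, mul_ite, Finset.sum_ite_eq] using this
  -- key identity: for α ∈ M i and c ∈ CB, c i = ∑ over α \ B of c
  have key : ∀ α ∈ M i, ∀ c ∈ CB, c i = ∑ t ∈ α \ B, c t := by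
    intro α hα c hc
    obtain ⟨hcard, hiα, hdual⟩ := hMq i hiN α hα
    obtain ⟨hcC, hcB⟩ := hCBmem c hc
    have h0 := hdual c hcC
    have h1 : (∑ t, c t * ((Pi.single i 1 + ∑ j ∈ α, Pi.single j (1 : ZMod 2)) : Fin n → ZMod 2) t)
        = c i + ∑ t ∈ α, c t := by
      have he : ∀ t, ((Pi.single i 1 + ∑ j ∈ α, Pi.single j (1 : ZMod 2)) : Fin n → ZMod 2) t
          = (if t = i then 1 else 0) + (if t ∈ α then 1 else 0) := by
        intro t
        simp [Pi.single_apply, Finset.sum_apply, Finset.sum_ite_eq]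
      simp only [he, mul_add, Finset.sum_add_distrib, mul_ite, mul_one, mul_zero]
      rw [Finset.sum_ite_eq' Finset.univ i c]
      simp [Finset.sum_ite_mem]
    rw [h1] at h0
    have h2 : c i = ∑ t ∈ α, c t := by
      rw [← sub_eq_zero, CharTwo.sub_eq_add]
      exact h0
    have h3 : ∑ t ∈ α ∩ B, c t = 0 :=
      Finset.sum_eq_zero fun t ht => hcB t (Finset.mem_inter.mp ht).2
    rw [h2, ← Finset.sum_inter_add_sum_sdiff α B c, h3, zero_add]
  -- consequence for u
  have keyu : ∀ α ∈ M i, u i = fun r => ∑ t ∈ α \ B, H r t := by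
    intro α hα
    funext r
    rw [hu]
    exact key α hα (H r) (hrow r)
  set F := (M i).filter (fun α => (α \ B).card ≤ 2) with hF
  have hKF : K ≤ F.card := hB i hiN hiB
  -- each α in F gives a good pair inside α
  have hpair : ∀ α ∈ F, ∃ s : Finset (Fin n), s ⊆ α ∧ s.Nonempty ∧
      ∃ j l : Fin n, j ≠ l ∧ s = {j, l} ∧ i ∉ s ∧ u i = u j + u l := by
    intro α hαF
    obtain ⟨hαM, hle⟩ := Finset.mem_filter.mp hαF
    obtain ⟨hcard, hiα, -⟩ := hMq i hiN α hαM
    have hkeyu := keyu α hαM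
    interval_cases h : (α \ B).card
    · -- card 0 : contradiction with u i ≠ 0
      exfalso
      apply hr₀
      have : α \ B = ∅ := Finset.card_eq_zero.mp h
      rw [congrFun hkeyu r₀, this]
      simp
    · -- card 1
      obtain ⟨j, hj⟩ := Finset.card_eq_one.mp h
      have hjα : j ∈ α \ B := hj ▸ Finset.mem_singleton_self j
      have hjB : j ∉ B := (Finset.mem_sdiff.mp hjα).2
      have hjα' : j ∈ α := (Finset.mem_sdiff.mp hjα).1
      have hBcard : 1 ≤ (α ∩ B).card := by
        have := Finset.card_sdiff_add_card_inter α B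
        omega
      obtain ⟨l, hl⟩ := Finset.card_pos.mp hBcard
      have hlα : l ∈ α := (Finset.mem_inter.mp hl).1
      have hlB : l ∈ B := (Finset.mem_inter.mp hl).2
      have hjl : j ≠ l := fun hjl => hjB (hjl ▸ hlB)
      refine ⟨{j, l}, ?_, ⟨j, by simp⟩, j, l, hjl, rfl, ?_, ?_⟩
      · intro t ht
        rcases Finset.mem_insert.mp ht with h' | h'
        · exact h' ▸ hjα'
        · exact (Finset.mem_singleton.mp h') ▸ hlα
      · simp only [Finset.mem_insert, Finset.mem_singleton]
        rintro (rfl | rfl) <;> [exact hiα hjα'; exact hiα hlα]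
      · rw [huB l hlB, add_zero, hkeyu, hj]
        funext r
        simp [hu]
    · -- card 2
      obtain ⟨j, l, hjl, hjlset⟩ := Finset.card_eq_two.mp h
      have hjα : j ∈ α := (Finset.mem_sdiff.mp (hjlset ▸ (by simp : j ∈ ({j, l} : Finset (Fin n))))).1
      have hlα : l ∈ α := (Finset.mem_sdiff.mp (hjlset ▸ (by simp : l ∈ ({j, l} : Finset (Fin n))))).1
      refine ⟨{j, l}, ?_, ⟨j, by simp⟩, j, l, hjl, rfl, ?_, ?_⟩
      · intro t ht
        rcases Finset.mem_insert.mp ht with h' | h'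
        · exact h' ▸ hjα
        · exact (Finset.mem_singleton.mp h') ▸ hlα
      · simp only [Finset.mem_insert, Finset.mem_singleton]
        rintro (rfl | rfl) <;> [exact hiα hjα; exact hiα hlα]
      · rw [hkeyu, hjlset]
        funext r
        simp [hu, Finset.sum_pair hjl]
  -- choose the pairs
  choose f hfsub hfne hfprop using hpair
  refine ⟨F.attach.image (fun a => f a.1 a.2), ?_, ?_, ?_⟩
  · rw [Finset.card_image_of_injective _ ?_, Finset.card_attach]
    · exact hKF
    · intro a b hab
      have hab2 : f a.1 a.2 = f b.1 b.2 := hab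
      by_contra hne
      have hab' : a.1 ≠ b.1 := fun h => hne (Subtype.ext h)
      have hdisj := hMdisj i hiN (Finset.mem_filter.mp a.2).1 (Finset.mem_filter.mp b.2).1 hab'
      have hd : Disjoint (f a.1 a.2) (f b.1 b.2) :=
        hdisj.mono (hfsub a.1 a.2) (hfsub b.1 b.2)
      rw [hab2] at hd
      exact (hfne b.1 b.2).ne_empty (disjoint_self.mp hd)
  · intro s hs t ht hst
    simp only [Finset.coe_image, Set.mem_image] at hs ht
    obtain ⟨a, -, rfl⟩ := hs
    obtain ⟨b, -, rfl⟩ := ht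
    have hab : a.1 ≠ b.1 := by
      rintro h
      exact hst (congrArg (fun x : { x // x ∈ F } => f x.1 x.2) (Subtype.ext h))
    have hdisj := hMdisj i hiN (Finset.mem_filter.mp a.2).1 (Finset.mem_filter.mp b.2).1 hab
    exact (hdisj.mono (hfsub a.1 a.2) (hfsub b.1 b.2))
  · intro s hs
    obtain ⟨a, -, rfl⟩ := Finset.mem_image.mp hs
    exact hfprop a.1 a.2
end

section
/- Let C ⊆ F₂ⁿ be a linear code with generating matrix G (a matrix whose rows span C) having columns v₁,…,vₙ. Let B ⊆ {1,…,n}, let C_B = {c ∈ C : cᵢ = 0 for all i ∈ B}, and let U = span{vᵢ : i ∈ B}. Then the covering radius of C^⊥ is at most the covering radius of C_B^⊥ plus dim U. -/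
/-- The covering radius of a subset `D ⊆ F₂ⁿ`: the least `R` such that every point of
`F₂ⁿ` is within Hamming distance `R` of some element of `D`. -/
noncomputable def coveringRadius {n : ℕ} (D : Set (Fin n → ZMod 2)) : ℕ :=
  sInf {R : ℕ | ∀ x : Fin n → ZMod 2, ∃ y ∈ D, hammingDist x y ≤ R}

open Matrix Submodule Module

section LinearAlgebra

variable {K V ι : Type*} [Field K] [AddCommGroup V] [Module K V]

theorem Submodule.mem_of_forall_dotProduct_eq_zero [Fintype ι] {W : Submodule K (ι → K)}
    {v : ι → K} (h : ∀ w : ι → K, (∀ x ∈ W, w ⬝ᵥ x = 0) → w ⬝ᵥ v = 0) : v ∈ W := by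
  classical
  rw [← Subspace.forall_mem_dualAnnihilator_apply_eq_zero_iff]
  intro φ hφ
  obtain ⟨w, rfl⟩ := (dotProductEquiv K ι).surjective φ
  exact h w fun x hx => (mem_dualAnnihilator _).1 hφ x hx

theorem Finset.exists_subset_card_eq_finrank_span (v : ι → V) (B : Finset ι) :
    ∃ S ⊆ B, span K (v '' S) = span K (v '' B) ∧ S.card = finrank K (span K (v '' B)) := by
  classical
  obtain ⟨b, hbB, -, hspan, hli⟩ :=
    exists_linearIndepOn_extension (linearIndepOn_empty K v) (Set.empty_subset (B : Set ι))
  obtain ⟨S, rfl⟩ : ∃ S : Finset ι, (S : Set ι) = b :=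
    ⟨B.filter (· ∈ b), by ext; simpa using fun h => hbB h⟩
  have hS : span K (v '' S) = span K (v '' B) :=
    le_antisymm (span_mono (Set.image_mono hbB)) (span_le.2 hspan)
  refine ⟨S, Finset.coe_subset.1 hbB, hS, ?_⟩
  rw [← hS, Set.image_eq_range, finrank_span_eq_card hli]
  simp

end LinearAlgebra

namespace Matrix

variable {K : Type*} [Field K] {m n : Type*} [Fintype n]

theorem mulVec_eq_linearCombination_col (G : Matrix m n K) (l : n →₀ K) :
    G *ᵥ ⇑l = Finsupp.linearCombination K G.col l := by
  ext r
  simp [Finsupp.linearCombination_apply, Finsupp.sum_fintype, mulVec, dotProduct, mul_comm]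

theorem exists_mulVec_eq_hammingNorm_le [DecidableEq K] {G : Matrix m n K} {B : Finset n}
    {u : m → K} (hu : u ∈ span K (G.col '' B)) :
    ∃ z, G *ᵥ z = u ∧ hammingNorm z ≤ finrank K (span K (G.col '' B)) := by
  obtain ⟨S, -, hS, hcard⟩ := Finset.exists_subset_card_eq_finrank_span (K := K) G.col B
  rw [← hS, Finsupp.mem_span_image_iff_linearCombination] at hu
  obtain ⟨l, hl, rfl⟩ := hu
  refine ⟨l, mulVec_eq_linearCombination_col G l, hcard ▸ Finset.card_le_card fun i hi => ?_⟩
  exact hl (by simpa using hi)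

omit [Fintype n] in
theorem vecMul_mem_span_range_row [Fintype m] (G : Matrix m n K) (w : m → K) :
    w ᵥ* G ∈ span K (Set.range G.row) :=
  range_vecMulLinear G ▸ LinearMap.mem_range_self _ w

end Matrix

section CoveringRadius

variable {n m : ℕ}

theorem coveringRadius_le {D : Set (Fin n → ZMod 2)} {R : ℕ}
    (h : ∀ x, ∃ y ∈ D, hammingDist x y ≤ R) : coveringRadius D ≤ R :=
  Nat.sInf_le h

theorem exists_hammingDist_le_coveringRadius {D : Set (Fin n → ZMod 2)} (hD : D.Nonempty)
    (x : Fin n → ZMod 2) : ∃ y ∈ D, hammingDist x y ≤ coveringRadius D := by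
  obtain ⟨y₀, hy₀⟩ := hD
  refine Nat.sInf_mem (s := {R | ∀ x, ∃ y ∈ D, hammingDist x y ≤ R}) ⟨n, fun x => ?_⟩ x
  exact ⟨y₀, hy₀, hammingDist_le_card_fintype.trans_eq (Fintype.card_fin n)⟩

theorem coveringRadius_le_add {D D' : Set (Fin n → ZMod 2)} {k : ℕ} (hD' : D'.Nonempty)
    (h : ∀ y' ∈ D', ∃ y ∈ D, hammingDist y' y ≤ k) :
    coveringRadius D ≤ coveringRadius D' + k := by
  refine coveringRadius_le fun x => ?_
  obtain ⟨y', hy', hxy'⟩ := exists_hammingDist_le_coveringRadius hD' x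
  obtain ⟨y, hy, hy'y⟩ := h y' hy'
  exact ⟨y, hy, (hammingDist_triangle x y' y).trans (add_le_add hxy' hy'y)⟩

theorem zero_mem_dualSet (V : Set (Fin n → ZMod 2)) : 0 ∈ dualSet V := by
  simp [dualSet]

theorem mem_dualSet_span_range_row_of_mulVec_eq_zero {G : Matrix (Fin m) (Fin n) (ZMod 2)}
    {y : Fin n → ZMod 2} (hy : G *ᵥ y = 0) :
    y ∈ dualSet (span (ZMod 2) (Set.range G.row)) := by
  intro x hx
  obtain ⟨w, rfl⟩ := LinearMap.mem_range.1 ((range_vecMulLinear G).symm ▸ hx)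
  change w ᵥ* G ⬝ᵥ y = 0
  rw [← dotProduct_mulVec, hy, dotProduct_zero]

theorem mulVec_mem_span_col_of_mem_dualSet {G : Matrix (Fin m) (Fin n) (ZMod 2)}
    {B : Finset (Fin n)} {y : Fin n → ZMod 2}
    (hy : y ∈ dualSet {c | c ∈ span (ZMod 2) (Set.range G.row) ∧ ∀ i ∈ B, c i = 0}) :
    G *ᵥ y ∈ span (ZMod 2) (G.col '' B) := by
  refine mem_of_forall_dotProduct_eq_zero fun w hw => ?_
  rw [dotProduct_mulVec]
  exact hy _ ⟨vecMul_mem_span_range_row G w, fun i hi => hw _ (subset_span ⟨i, hi, rfl⟩)⟩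

end CoveringRadius

/-- The covering radius of `C^⊥` is at most the covering radius of `C_B^⊥` plus `dim U`,
where `C_B` is the subcode of `C` vanishing on `B` and `U` is the span of the columns of
a generating matrix of `C` indexed by `B`. -/
theorem covering_radius_split
    (n m : ℕ)
    (C : Submodule (ZMod 2) (Fin n → ZMod 2))
    (G : Fin m → Fin n → ZMod 2)
    (hG : Submodule.span (ZMod 2) (Set.range G) = C)
    (B : Finset (Fin n))
    (CB : Submodule (ZMod 2) (Fin n → ZMod 2))
    (hCB : (CB : Set (Fin n → ZMod 2)) = {c | c ∈ C ∧ ∀ i ∈ B, c i = 0})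
    (U : Submodule (ZMod 2) (Fin m → ZMod 2))
    (hU : U = Submodule.span (ZMod 2) {w : Fin m → ZMod 2 | ∃ i ∈ B, w = fun r => G r i}) :
    coveringRadius (dualSet (C : Set (Fin n → ZMod 2))) ≤
      coveringRadius (dualSet (CB : Set (Fin n → ZMod 2))) + Module.finrank (ZMod 2) U := by
  set M : Matrix (Fin m) (Fin n) (ZMod 2) := Matrix.of G
  have hC : C = span (ZMod 2) (Set.range M.row) := hG.symm
  have hU' : U = span (ZMod 2) (M.col '' B) :=
    hU.trans <| congrArg _ <| Set.ext fun _ =>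
      exists_congr fun _ => and_congr_right fun _ => eq_comm
  refine hU' ▸ coveringRadius_le_add ⟨0, zero_mem_dualSet _⟩ fun y' hy' => ?_
  rw [hCB, hC] at hy'
  obtain ⟨z, hz, hz_weight⟩ :=
    exists_mulVec_eq_hammingNorm_le (mulVec_mem_span_col_of_mem_dualSet hy')
  refine ⟨y' - z, hC ▸ mem_dualSet_span_range_row_of_mulVec_eq_zero ?_, ?_⟩
  · rw [mulVec_sub, hz, sub_self]
  · rwa [hammingDist_comm, hammingDist_eq_hammingNorm, neg_sub, sub_add_cancel]
end

section
/- Let C ⊆ F₂ⁿ be a perfect 3-locally correctable code, let r ≥ 2 be an integer, and let x ∈ F₂ⁿ be such that the minimum Hamming weight of a vector in the coset x + C^⊥ equals r. Then the number of indices k ∈ {1,…,n} for which the minimum Hamming weight of a vector in the coset (x + e_k) + C^⊥ equals r − 1 is at least ⌊r/2⌋². -/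
open Finset
open scoped symmDiff

namespace P3LCC

variable {n : ℕ}

/-- indicator vector of a finset -/
def chi (A : Finset (Fin n)) : Fin n → ZMod 2 := fun k => if k ∈ A then 1 else 0

lemma chi_apply (A : Finset (Fin n)) (k : Fin n) : chi A k = if k ∈ A then 1 else 0 := rfl

lemma chi_apply_ne_zero {A : Finset (Fin n)} {k : Fin n} : chi A k ≠ 0 ↔ k ∈ A := by
  simp only [chi_apply]
  split <;> simp_all

lemma hammingNorm_chi (A : Finset (Fin n)) : hammingNorm (chi A) = A.card := by
  unfold hammingNorm
  congr 1
  ext k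
  simp [chi_apply_ne_zero]

lemma chi_add (A B : Finset (Fin n)) : chi A + chi B = chi (A ∆ B) := by
  funext k
  simp only [Pi.add_apply, chi_apply, Finset.mem_symmDiff]
  by_cases hA : k ∈ A <;> by_cases hB : k ∈ B <;> simp [hA, hB] <;> decide

/-- support of a vector as a finset -/
def suppF (v : Fin n → ZMod 2) : Finset (Fin n) := {k | v k ≠ 0}

lemma hammingNorm_eq (v : Fin n → ZMod 2) : hammingNorm v = (suppF v).card := rfl

lemma mem_suppF {v : Fin n → ZMod 2} {k : Fin n} : k ∈ suppF v ↔ v k ≠ 0 := by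
  simp [suppF]

lemma eq_chi_supp (v : Fin n → ZMod 2) : v = chi (suppF v) := by
  funext k
  simp only [chi_apply, suppF, Finset.mem_filter, Finset.mem_univ, true_and]
  have h2 : ∀ a : ZMod 2, a ≠ 0 → a = 1 := by decide
  by_cases h : v k = 0 <;> simp [h, h2 (v k)]

lemma card_symmDiff (A B : Finset (Fin n)) :
    (A ∆ B).card + (A ∩ B).card + (A ∩ B).card = A.card + B.card := by
  have h1 : A ∆ B = (A ∪ B) \ (A ∩ B) := by
    ext k; simp [Finset.mem_symmDiff]; tauto
  have h2 := Finset.card_union_add_card_inter A B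
  have h3 : (A ∩ B) ⊆ A ∪ B := (Finset.inter_subset_left).trans Finset.subset_union_left
  have h4 := Finset.card_sdiff_of_subset h3
  have h5 := Finset.card_le_card h3
  rw [h1, h4]
  omega

lemma single_eq_chi (i : Fin n) : Pi.single i (1 : ZMod 2) = chi {i} := by
  funext k
  simp [Pi.single_apply, chi_apply, eq_comm]

lemma sum_single_eq_chi (α : Finset (Fin n)) :
    (∑ j ∈ α, Pi.single j (1 : ZMod 2)) = chi α := by
  funext k
  rw [Finset.sum_apply]
  simp only [Pi.single_apply, chi_apply]
  rw [Finset.sum_ite_eq α k (fun _ => (1 : ZMod 2))]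

lemma dual_zero (V : Set (Fin n → ZMod 2)) : (0 : Fin n → ZMod 2) ∈ dualSet V := by
  intro y hy
  simp

lemma dual_add {V : Set (Fin n → ZMod 2)} {a b : Fin n → ZMod 2}
    (ha : a ∈ dualSet V) (hb : b ∈ dualSet V) : a + b ∈ dualSet V := by
  intro y hy
  have h1 := ha y hy
  have h2 := hb y hy
  have h3 : ∀ i : Fin n, y i * (a + b) i = y i * a i + y i * b i := by
    intro i; simp [mul_add]
  rw [Finset.sum_congr rfl (fun i _ => h3 i), Finset.sum_add_distrib, h1, h2, add_zero]

end P3LCC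

/-- `C` is a perfect 3-locally correctable code: `n ≡ 1 (mod 3)` and for every
coordinate `i` there is a partition of `{1,…,n}∖{i}` into `(n-1)/3` three-element
sets `α` with `eᵢ + Σ_{j∈α} eⱼ ∈ C^⊥`. -/
def IsPerfect3LCC (n : ℕ) (C : Submodule (ZMod 2) (Fin n → ZMod 2)) : Prop :=
  n % 3 = 1 ∧
  ∀ i : Fin n, ∃ P : Finset (Finset (Fin n)),
    P.card = (n - 1) / 3 ∧
    (∀ α ∈ P, α.card = 3) ∧
    (P : Set (Finset (Fin n))).PairwiseDisjoint id ∧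
    (∀ α ∈ P, i ∉ α) ∧
    (∀ j : Fin n, j ≠ i → ∃ α ∈ P, j ∈ α) ∧
    (∀ α ∈ P, (Pi.single i 1 + ∑ j ∈ α, Pi.single j (1 : ZMod 2)) ∈
      dualSet (C : Set (Fin n → ZMod 2)))

/-- The minimum Hamming weight over the coset `x + C^⊥` (as an `IsLeast` statement). -/
def MinCosetWeight {n : ℕ} (C : Submodule (ZMod 2) (Fin n → ZMod 2))
    (x : Fin n → ZMod 2) (r : ℕ) : Prop :=
  IsLeast {w : ℕ | ∃ z : Fin n → ZMod 2,
    z - x ∈ dualSet (C : Set (Fin n → ZMod 2)) ∧ hammingNorm z = w} r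

/-- If the coset `x + C^⊥` of a perfect 3-locally correctable code has minimum weight
`r ≥ 2`, then for at least `⌊r/2⌋²` indices `k` the coset `(x + e_k) + C^⊥` has minimum
weight `r - 1`. -/
theorem perfect_3LCC_sphere_edges
    (n : ℕ) (C : Submodule (ZMod 2) (Fin n → ZMod 2))
    (hC : IsPerfect3LCC n C)
    (r : ℕ) (hr : 2 ≤ r)
    (x : Fin n → ZMod 2) (hx : MinCosetWeight C x r) :
    (r / 2) ^ 2 ≤
      Set.ncard {k : Fin n | MinCosetWeight C (x + Pi.single k 1) (r - 1)} := by
  classical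
  obtain ⟨-, hpart⟩ := hC
  set D := dualSet (C : Set (Fin n → ZMod 2)) with hD
  obtain ⟨⟨w, hwD, hwnorm⟩, hlb⟩ := hx
  have hmin : ∀ z : Fin n → ZMod 2, z - x ∈ D → r ≤ hammingNorm z :=
    fun z hz => hlb ⟨z, hz, rfl⟩
  set T : Finset (Fin n) := P3LCC.suppF w with hT
  have hwchi : w = P3LCC.chi T := P3LCC.eq_chi_supp w
  have hTcard : T.card = r := by rw [← hwnorm]; rfl
  set m := r / 2 with hm
  -- two disjoint injections Fin m → T
  have hsr : ∀ s : Fin m, (s : ℕ) < r := fun s => by have := s.2; omega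
  have htr : ∀ t : Fin m, m + (t : ℕ) < r := fun t => by have := t.2; omega
  set e := T.orderIsoOfFin hTcard with he
  set I : Fin m → Fin n := fun s => (e ⟨s, hsr s⟩ : Fin n) with hI
  set J : Fin m → Fin n := fun t => (e ⟨m + t, htr t⟩ : Fin n) with hJ
  have hIT : ∀ s, I s ∈ T := fun s => (e ⟨s, hsr s⟩).2
  have hJT : ∀ t, J t ∈ T := fun t => (e ⟨m + t, htr t⟩).2
  have emb_inj : ∀ a b : Fin r, (e a : Fin n) = e b → a = b := by
    intro a b hab
    exact e.injective (Subtype.ext hab)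
  have hII : ∀ s s', I s = I s' → s = s' := by
    intro s s' h
    have h2 := emb_inj _ _ h
    have h3 : (s : ℕ) = (s' : ℕ) := by simpa using congrArg Fin.val h2
    exact Fin.ext h3
  have hJJ : ∀ t t', J t = J t' → t = t' := by
    intro t t' h
    have h2 := emb_inj _ _ h
    have h3 : m + (t : ℕ) = m + (t' : ℕ) := by simpa using congrArg Fin.val h2
    exact Fin.ext (by omega)
  have hIJ : ∀ s t, I s ≠ J t := by
    intro s t h
    have h2 := emb_inj _ _ h
    have h3 : (s : ℕ) = m + (t : ℕ) := by simpa using congrArg Fin.val h2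
    have := s.2
    omega
  -- choose the triples
  choose P hPcard hP3 hPdisj hPnotmem hPcover hPdual using fun s : Fin m => hpart (I s)
  choose A hAP hAJ using fun (s t : Fin m) => hPcover s (J t) (fun h => hIJ s t h.symm)
  have hInotA : ∀ s t, I s ∉ A s t := fun s t => hPnotmem s (A s t) (hAP s t)
  set u : Fin m → Fin m → (Fin n → ZMod 2) :=
    fun s t => Pi.single (I s) 1 + ∑ j ∈ A s t, Pi.single j 1 with hu
  have huD : ∀ s t, u s t ∈ D := fun s t => hPdual s (A s t) (hAP s t)
  set B : Fin m → Fin m → Finset (Fin n) := fun s t => insert (I s) (A s t) with hB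
  have huchi : ∀ s t, u s t = P3LCC.chi (B s t) := by
    intro s t
    have hset : ({I s} : Finset (Fin n)) ∆ (A s t) = insert (I s) (A s t) := by
      ext a
      simp only [Finset.mem_symmDiff, Finset.mem_singleton, Finset.mem_insert]
      constructor
      · rintro (⟨rfl, -⟩ | ⟨h1, h2⟩)
        · exact Or.inl rfl
        · exact Or.inr h1
      · rintro (rfl | h1)
        · exact Or.inl ⟨rfl, hInotA s t⟩
        · exact Or.inr ⟨h1, fun h => hInotA s t (h ▸ h1)⟩
    show Pi.single (I s) 1 + ∑ j ∈ A s t, Pi.single j 1 = _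
    rw [P3LCC.single_eq_chi, P3LCC.sum_single_eq_chi, P3LCC.chi_add, hset]
  have hBcard : ∀ s t, (B s t).card = 4 := by
    intro s t
    show (insert (I s) (A s t)).card = 4
    rw [Finset.card_insert_of_notMem (hInotA s t), hP3 s (A s t) (hAP s t)]
  have hIB : ∀ s t, I s ∈ B s t := fun s t => Finset.mem_insert_self _ _
  have hJB : ∀ s t, J t ∈ B s t := fun s t => Finset.mem_insert_of_mem (hAJ s t)
  have hc2 : ∀ s t, ({I s, J t} : Finset (Fin n)).card = 2 := by
    intro s t
    rw [Finset.card_insert_of_notMem (by simp [hIJ s t]), Finset.card_singleton]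
  -- the key minimality consequence
  have hkey : ∀ s t, T ∩ B s t = {I s, J t} := by
    intro s t
    have h1 : r ≤ hammingNorm (w + u s t) := by
      apply hmin
      have h2 : (w + u s t) - x = (w - x) + u s t := by ring
      rw [h2]
      exact P3LCC.dual_add hwD (huD s t)
    rw [hwchi, huchi s t, P3LCC.chi_add, P3LCC.hammingNorm_chi] at h1
    have h2 := P3LCC.card_symmDiff T (B s t)
    have hsub : ({I s, J t} : Finset (Fin n)) ⊆ T ∩ B s t := by
      intro k hk
      rcases Finset.mem_insert.mp hk with rfl | hk
      · exact Finset.mem_inter.mpr ⟨hIT s, hIB s t⟩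
      · rw [Finset.mem_singleton] at hk
        subst hk
        exact Finset.mem_inter.mpr ⟨hJT t, hJB s t⟩
    refine (Finset.eq_of_subset_of_card_le hsub ?_).symm
    have h3 := hBcard s t
    have h4 := hc2 s t
    omega
  have hTA : ∀ s t, T ∩ A s t = {J t} := by
    intro s t
    ext k
    simp only [Finset.mem_inter, Finset.mem_singleton]
    constructor
    · rintro ⟨hkT, hkA⟩
      have hkB : k ∈ T ∩ B s t := Finset.mem_inter.mpr ⟨hkT, Finset.mem_insert_of_mem hkA⟩
      rw [hkey s t] at hkB
      rcases Finset.mem_insert.mp hkB with rfl | hkB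
      · exact absurd hkA (hInotA s t)
      · exact Finset.mem_singleton.mp hkB
    · rintro rfl
      exact ⟨hJT t, hAJ s t⟩
  have hTBcard : ∀ s t, (T ∆ B s t).card = r := by
    intro s t
    have h2 := P3LCC.card_symmDiff T (B s t)
    rw [hkey s t] at h2
    have h3 := hBcard s t
    have h4 := hc2 s t
    omega
  -- membership in the target set, from a single move
  have hS' : ∀ k : Fin n, k ∉ T → (∃ s t, k ∈ A s t) →
      MinCosetWeight C (x + Pi.single k 1) (r - 1) := by
    rintro k hkT ⟨s, t, hkA⟩
    have hkB : k ∈ B s t := Finset.mem_insert_of_mem hkA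
    have hkTB : k ∈ T ∆ B s t := Finset.mem_symmDiff.mpr (Or.inr ⟨hkB, hkT⟩)
    have hw'D : (P3LCC.chi (T ∆ B s t)) - x ∈ D := by
      have e1 : P3LCC.chi (T ∆ B s t) = w + u s t := by
        rw [hwchi, huchi s t, P3LCC.chi_add]
      rw [e1]
      have e2 : w + u s t - x = (w - x) + u s t := by ring
      rw [e2]
      exact P3LCC.dual_add hwD (huD s t)
    constructor
    · refine ⟨P3LCC.chi ((T ∆ B s t) ∆ {k}), ?_, ?_⟩
      · have e1 : P3LCC.chi ((T ∆ B s t) ∆ {k}) =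
            P3LCC.chi (T ∆ B s t) + Pi.single k 1 := by
          rw [P3LCC.single_eq_chi, P3LCC.chi_add]
        rw [e1]
        have e2 : P3LCC.chi (T ∆ B s t) + Pi.single k 1 - (x + Pi.single k 1) =
            P3LCC.chi (T ∆ B s t) - x := by ring
        rw [e2]
        exact hw'D
      · rw [P3LCC.hammingNorm_chi]
        have hinter : (T ∆ B s t) ∩ {k} = {k} :=
          Finset.inter_singleton_of_mem hkTB
        have hcs := P3LCC.card_symmDiff (T ∆ B s t) {k}
        rw [hinter, Finset.card_singleton] at hcs
        have h3 := hTBcard s t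
        omega
    · rintro b ⟨z, hzD, rfl⟩
      have h0 : (Pi.single k 1 : Fin n → ZMod 2) + Pi.single k 1 = 0 := by
        funext j
        have : ∀ a : ZMod 2, a + a = 0 := by decide
        exact this _
      have hzk : (z + Pi.single k 1) - x ∈ D := by
        have e2 : (z + Pi.single k 1) - x =
            (z - (x + Pi.single k 1)) + (Pi.single k 1 + Pi.single k 1) := by ring
        rw [e2, h0, add_zero]
        exact hzD
      have h1 : r ≤ hammingNorm (z + Pi.single k 1) := hmin _ hzk
      have e1 : z + Pi.single k 1 = P3LCC.chi ((P3LCC.suppF z) ∆ {k}) := by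
        rw [← P3LCC.chi_add, ← P3LCC.single_eq_chi, ← P3LCC.eq_chi_supp]
      rw [e1, P3LCC.hammingNorm_chi] at h1
      have hcs := P3LCC.card_symmDiff (P3LCC.suppF z) {k}
      rw [Finset.card_singleton] at hcs
      have hn : hammingNorm z = (P3LCC.suppF z).card := rfl
      omega
  -- the sum vectors
  set Zf : Fin m → (Fin n → ZMod 2) := fun t => ∑ s : Fin m, u s t with hZf
  have hZD : ∀ t, Zf t ∈ D := by
    intro t
    refine Finset.sum_induction _ (· ∈ D) (fun a b ha hb => P3LCC.dual_add ha hb)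
      (P3LCC.dual_zero _) (fun s _ => huD s t)
  set V : Fin m → Finset (Fin n) := fun t => P3LCC.suppF (Zf t) with hV
  set G : Fin m → Finset (Fin n) := fun t => V t \ T with hG
  have hwZ : ∀ t, w + Zf t = P3LCC.chi (T ∆ V t) := by
    intro t
    rw [← P3LCC.chi_add, ← hwchi]
    congr 1
    exact P3LCC.eq_chi_supp (Zf t)
  have hVr : ∀ t, r ≤ (T ∆ V t).card := by
    intro t
    have h1 : (w + Zf t) - x ∈ D := by
      have e2 : (w + Zf t) - x = (w - x) + Zf t := by ring
      rw [e2]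
      exact P3LCC.dual_add hwD (hZD t)
    have h2 := hmin _ h1
    rwa [hwZ t, P3LCC.hammingNorm_chi] at h2
  have hIV : ∀ t s, I s ∈ V t := by
    intro t s
    have hterm : ∀ s' : Fin m, u s' t (I s) = if s' = s then 1 else 0 := by
      intro s'
      rw [huchi s' t]
      by_cases h : s' = s
      · subst h
        simp [P3LCC.chi_apply, hIB s' t]
      · have hnot : I s ∉ B s' t := by
          show I s ∉ insert (I s') (A s' t)
          simp only [Finset.mem_insert]
          rintro (h1 | h2)
          · exact h (hII s' s h1.symm)
          · have : I s ∈ T ∩ A s' t := Finset.mem_inter.mpr ⟨hIT s, h2⟩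
            rw [hTA s' t] at this
            exact hIJ s t (Finset.mem_singleton.mp this)
        simp [P3LCC.chi_apply, hnot, h]
    have hval : Zf t (I s) = 1 := by
      show (∑ s' : Fin m, u s' t) (I s) = 1
      rw [Finset.sum_apply]
      rw [Finset.sum_congr rfl (fun s' _ => hterm s')]
      simp
    exact P3LCC.mem_suppF.mpr (by rw [hval]; exact one_ne_zero)
  have hGcard : ∀ t, m ≤ (G t).card := by
    intro t
    have himg : Finset.image I Finset.univ ⊆ T ∩ V t := by
      intro k hk
      obtain ⟨s, -, rfl⟩ := Finset.mem_image.mp hk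
      exact Finset.mem_inter.mpr ⟨hIT s, hIV t s⟩
    have hicard : (Finset.image I Finset.univ).card = m := by
      rw [Finset.card_image_of_injective _ (fun a b h => hII a b h)]
      simp
    have h1 : m ≤ (T ∩ V t).card := hicard ▸ Finset.card_le_card himg
    have h2 := P3LCC.card_symmDiff T (V t)
    have h3 : (V t ∩ T).card + (V t \ T).card = (V t).card :=
      Finset.card_inter_add_card_sdiff (V t) T
    rw [Finset.inter_comm] at h3
    have h4 := hVr t
    show m ≤ (V t \ T).card
    omega
  have hAk : ∀ t k, k ∈ G t → ∃ s, k ∈ A s t := by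
    intro t k hk
    have hkV : k ∈ V t := (Finset.mem_sdiff.mp hk).1
    have hkT : k ∉ T := (Finset.mem_sdiff.mp hk).2
    have hne : Zf t k ≠ 0 := P3LCC.mem_suppF.mp hkV
    by_contra hno
    push_neg at hno
    apply hne
    show (∑ s' : Fin m, u s' t) k = 0
    rw [Finset.sum_apply]
    refine Finset.sum_eq_zero fun s _ => ?_
    rw [huchi s t]
    have hnot : k ∉ B s t := by
      show k ∉ insert (I s) (A s t)
      simp only [Finset.mem_insert]
      rintro (rfl | h2)
      · exact hkT (hIT s)
      · exact hno s h2
    simp [P3LCC.chi_apply, hnot]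
  have hdisj : ∀ t t', t ≠ t' → Disjoint (G t) (G t') := by
    intro t t' htt
    rw [Finset.disjoint_left]
    intro k hk hk'
    have hkT : k ∉ T := (Finset.mem_sdiff.mp hk).2
    obtain ⟨s, hks⟩ := hAk t k hk
    obtain ⟨s', hks'⟩ := hAk t' k hk'
    by_cases hss : s = s'
    · subst hss
      have hne : A s t ≠ A s t' := by
        intro hEq
        have h1 : J t' ∈ T ∩ A s t := by
          rw [hEq]
          exact Finset.mem_inter.mpr ⟨hJT t', hAJ s t'⟩
        rw [hTA s t] at h1
        exact htt (hJJ t' t (Finset.mem_singleton.mp h1)).symm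
      have hd := hPdisj s (hAP s t) (hAP s t') hne
      exact (Finset.disjoint_left.mp hd) hks hks'
    · -- two moves with all four indices distinct jointly decrease the weight: contradiction
      have hzD : P3LCC.chi ((T ∆ B s t) ∆ B s' t') - x ∈ D := by
        have e1 : P3LCC.chi ((T ∆ B s t) ∆ B s' t') = (w + u s t) + u s' t' := by
          rw [hwchi, huchi s t, huchi s' t', P3LCC.chi_add, P3LCC.chi_add]
        rw [e1]
        have e2 : (w + u s t) + u s' t' - x = ((w - x) + u s t) + u s' t' := by ring
        rw [e2]
        exact P3LCC.dual_add (P3LCC.dual_add hwD (huD s t)) (huD s' t')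
      have h1 : r ≤ ((T ∆ B s t) ∆ B s' t').card := by
        have := hmin _ hzD
        rwa [P3LCC.hammingNorm_chi] at this
      have hIs'B : I s' ∉ B s t := by
        show I s' ∉ insert (I s) (A s t)
        simp only [Finset.mem_insert]
        rintro (h2 | h2)
        · exact hss (hII s' s h2).symm
        · have : I s' ∈ T ∩ A s t := Finset.mem_inter.mpr ⟨hIT s', h2⟩
          rw [hTA s t] at this
          exact hIJ s' t (Finset.mem_singleton.mp this)
      have hJt'B : J t' ∉ B s t := by
        show J t' ∉ insert (I s) (A s t)
        simp only [Finset.mem_insert]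
        rintro (h2 | h2)
        · exact hIJ s t' h2.symm
        · have : J t' ∈ T ∩ A s t := Finset.mem_inter.mpr ⟨hJT t', h2⟩
          rw [hTA s t] at this
          exact htt (hJJ t' t (Finset.mem_singleton.mp this)).symm
      have hsub3 : ({I s', J t', k} : Finset (Fin n)) ⊆ (T ∆ B s t) ∩ B s' t' := by
        intro a ha
        simp only [Finset.mem_insert, Finset.mem_singleton] at ha
        rcases ha with rfl | rfl | rfl
        · exact Finset.mem_inter.mpr
            ⟨Finset.mem_symmDiff.mpr (Or.inl ⟨hIT s', hIs'B⟩), hIB s' t'⟩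
        · exact Finset.mem_inter.mpr
            ⟨Finset.mem_symmDiff.mpr (Or.inl ⟨hJT t', hJt'B⟩), hJB s' t'⟩
        · exact Finset.mem_inter.mpr
            ⟨Finset.mem_symmDiff.mpr (Or.inr ⟨Finset.mem_insert_of_mem hks, hkT⟩),
              Finset.mem_insert_of_mem hks'⟩
      have hc3 : ({I s', J t', k} : Finset (Fin n)).card = 3 := by
        rw [Finset.card_insert_of_notMem (by
          simp only [Finset.mem_insert, Finset.mem_singleton]
          rintro (h2 | h2)
          · exact hIJ s' t' h2
          · exact hkT (h2 ▸ hIT s'))]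
        rw [Finset.card_insert_of_notMem (by
          simp only [Finset.mem_singleton]
          intro h2
          exact hkT (h2 ▸ hJT t'))]
        rw [Finset.card_singleton]
      have h5 : 3 ≤ ((T ∆ B s t) ∩ B s' t').card := hc3 ▸ Finset.card_le_card hsub3
      have h2 := P3LCC.card_symmDiff (T ∆ B s t) (B s' t')
      have h3 := hTBcard s t
      have h4 := hBcard s' t'
      omega
  -- assemble
  set Gall := Finset.univ.biUnion G with hGall
  have hcard : m * m ≤ Gall.card := by
    rw [hGall, Finset.card_biUnion (fun t _ t' _ h => hdisj t t' h)]
    calc m * m = ∑ _t : Fin m, m := by simp [Finset.sum_const, mul_comm]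
      _ ≤ ∑ t : Fin m, (G t).card := Finset.sum_le_sum (fun t _ => hGcard t)
  have hsubset : (Gall : Set (Fin n)) ⊆
      {k : Fin n | MinCosetWeight C (x + Pi.single k 1) (r - 1)} := by
    intro k hk
    rw [Finset.mem_coe, hGall, Finset.mem_biUnion] at hk
    obtain ⟨t, -, hkt⟩ := hk
    have hkT : k ∉ T := (Finset.mem_sdiff.mp hkt).2
    obtain ⟨s, hks⟩ := hAk t k hkt
    exact hS' k hkT ⟨s, t, hks⟩
  calc (r / 2) ^ 2 = m * m := by rw [hm, pow_two]
    _ ≤ Gall.card := hcard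
    _ = (Gall : Set (Fin n)).ncard := (Set.ncard_coe_finset _).symm
    _ ≤ _ := Set.ncard_le_ncard hsubset (Set.toFinite _)
end

section
/- There exists an absolute constant c > 1 such that the following holds: for every integer n ≥ 1 and every sequence of nonnegative reals a₀, a₁, …, aₙ with a₀ = 1, a₁ ≤ n, and ⌊r/2⌋²·a_r ≤ n·a_{r−1} for every integer r with 2 ≤ r ≤ n, one has Σ_{r=0}^{n} a_r ≤ c^{√n}. -/
/-- If `a₀ = 1`, `a₁ ≤ n`, and `⌊r/2⌋²·a_r ≤ n·a_{r-1}` for `2 ≤ r ≤ n`, then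
`Σ_{r=0}^{n} a_r ≤ c^{√n}` for an absolute constant `c > 1`. -/
theorem sphere_growth_sum :
    ∃ c : ℝ, 1 < c ∧
      ∀ n : ℕ, 1 ≤ n → ∀ a : ℕ → ℝ,
        (∀ r : ℕ, r ≤ n → 0 ≤ a r) →
        a 0 = 1 →
        a 1 ≤ (n : ℝ) →
        (∀ r : ℕ, 2 ≤ r → r ≤ n → ((r / 2 : ℕ) ^ 2 : ℝ) * a r ≤ (n : ℝ) * a (r - 1)) →
        ∑ r ∈ Finset.range (n + 1), a r ≤ c ^ (Real.sqrt n) := by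
  refine ⟨Real.exp 8, by nlinarith [Real.add_one_le_exp (8:ℝ)], ?_⟩
  intro n hn a ha h0 h1 hrec
  set s := Real.sqrt n with hs
  have hs0 : 0 ≤ s := Real.sqrt_nonneg _
  have hn1 : (1:ℝ) ≤ (n:ℝ) := by exact_mod_cast hn
  set E := Real.exp s with hE
  have hE1 : 1 ≤ E := Real.one_le_exp hs0
  have hsq : s ^ 2 = (n:ℝ) := Real.sq_sqrt (by positivity)
  -- key inductive bound
  have key : ∀ r : ℕ, r ≤ n →
      a r * (((r/2).factorial * ((r-1)/2).factorial : ℕ) : ℝ)^2 ≤ (n:ℝ)^r := by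
    intro r
    induction r with
    | zero => intro _; simp [h0]
    | succ r ih =>
      intro hrn
      rcases Nat.eq_zero_or_pos r with hr0 | hr1
      · subst hr0; simpa using h1
      · have hr2 : 2 ≤ r + 1 := by omega
        have hdiv : (r+1)/2 = (r-1)/2 + 1 := by omega
        have hfac : ((r+1)/2).factorial = ((r+1)/2) * ((r-1)/2).factorial := by
          rw [hdiv, Nat.factorial_succ]
        have hrec' := hrec (r+1) hr2 hrn
        simp only [Nat.add_sub_cancel] at hrec'
        have ihr := ih (by omega)
        have har : 0 ≤ a r := ha r (by omega)
        have har1 : 0 ≤ a (r+1) := ha (r+1) hrn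
        have hF : (0:ℝ) ≤ ((((r)/2).factorial * ((r-1)/2).factorial : ℕ) : ℝ)^2 := by positivity
        have hsub : ((r+1) - 1 : ℕ) = r := rfl
        rw [hsub, hfac]
        push_cast
        have e1 : a (r+1) * ((((r+1)/2 : ℕ):ℝ) * (((r-1)/2).factorial : ℝ) *
              ((r/2).factorial : ℝ))^2
            = ((((r+1)/2 : ℕ):ℝ)^2 * a (r+1)) *
              (((r/2).factorial : ℝ) * (((r-1)/2).factorial : ℝ))^2 := by ring
        rw [e1]
        calc ((((r+1)/2 : ℕ):ℝ)^2 * a (r+1)) *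
              (((r/2).factorial : ℝ) * (((r-1)/2).factorial : ℝ))^2
            ≤ ((n:ℝ) * a r) * (((r/2).factorial : ℝ) * (((r-1)/2).factorial : ℝ))^2 := by
              apply mul_le_mul_of_nonneg_right hrec' (by positivity)
          _ = (n:ℝ) * (a r * (((r/2).factorial : ℝ) * (((r-1)/2).factorial : ℝ))^2) := by ring
          _ ≤ (n:ℝ) * (n:ℝ)^r := by
              apply mul_le_mul_of_nonneg_left _ (by linarith)
              have := ihr; push_cast at this; exact this
          _ = (n:ℝ)^(r+1) := by ring
  -- pointwise bound a r ≤ n * E^4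
  have pt : ∀ r : ℕ, r ≤ n → a r ≤ (n:ℝ) * E^4 := by
    intro r hrn
    rcases Nat.eq_zero_or_pos r with hr0 | hr1
    · subst hr0; rw [h0]
      have hE4 : (1:ℝ) ≤ E^4 := one_le_pow₀ hE1
      nlinarith
    · set p := r/2 with hp
      set q := (r-1)/2 with hq
      have hpq : p + q = r - 1 := by omega
      have hK1 : (1:ℝ) ≤ ((p.factorial * q.factorial : ℕ) : ℝ) := by
        exact_mod_cast Nat.one_le_iff_ne_zero.mpr (by positivity)
      have hK0 : (0:ℝ) < (((p.factorial * q.factorial : ℕ) : ℝ))^2 := by positivity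
      have hsp : s^p ≤ (p.factorial : ℝ) * E := by
        have := Real.pow_div_factorial_le_exp (x := s) hs0 p
        rw [div_le_iff₀ (by positivity)] at this
        linarith [this]
      have hsq' : s^q ≤ (q.factorial : ℝ) * E := by
        have := Real.pow_div_factorial_le_exp (x := s) hs0 q
        rw [div_le_iff₀ (by positivity)] at this
        linarith [this]
      have hnr : (n:ℝ)^r ≤ ((n:ℝ) * E^4) * (((p.factorial * q.factorial : ℕ) : ℝ))^2 := by
        have hr : r = p + q + 1 := by omega
        have e2 : (n:ℝ)^r = (n:ℝ) * (s^p * s^q)^2 := by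
          rw [hr, ← hsq]; ring
        rw [e2]
        have hsp0 : 0 ≤ s^p := by positivity
        have hsq0 : 0 ≤ s^q := by positivity
        have h2 : (s^p * s^q)^2 ≤ ((p.factorial : ℝ) * E * ((q.factorial : ℝ) * E))^2 := by
          apply pow_le_pow_left₀ (by positivity)
          exact mul_le_mul hsp hsq' hsq0 (by positivity)
        calc (n:ℝ) * (s^p * s^q)^2
            ≤ (n:ℝ) * ((p.factorial : ℝ) * E * ((q.factorial : ℝ) * E))^2 := by
              apply mul_le_mul_of_nonneg_left h2 (by linarith)
          _ = ((n:ℝ) * E^4) * (((p.factorial : ℝ) * (q.factorial : ℝ)))^2 := by ring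
          _ = ((n:ℝ) * E^4) * (((p.factorial * q.factorial : ℕ) : ℝ))^2 := by push_cast; ring
      have hk := key r hrn
      have : a r * (((p.factorial * q.factorial : ℕ)) : ℝ)^2 ≤
          ((n:ℝ) * E^4) * (((p.factorial * q.factorial : ℕ)) : ℝ)^2 := le_trans hk hnr
      exact le_of_mul_le_mul_right this hK0
  -- sum it up
  have hsum : ∑ r ∈ Finset.range (n + 1), a r ≤ ((n:ℝ)+1) * ((n:ℝ) * E^4) := by
    calc ∑ r ∈ Finset.range (n + 1), a r
        ≤ ∑ r ∈ Finset.range (n + 1), (n:ℝ) * E^4 := by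
          apply Finset.sum_le_sum
          intro i hi
          exact pt i (by simpa using Nat.lt_succ_iff.mp (Finset.mem_range.mp hi))
      _ = ((n:ℝ)+1) * ((n:ℝ) * E^4) := by
          rw [Finset.sum_const, Finset.card_range]
          push_cast; ring
  have hn2 : (n:ℝ) + 1 ≤ E^2 := by
    have h1s : 1 + s ≤ E := by
      have := Real.add_one_le_exp s; linarith
    nlinarith
  have hfinal : ((n:ℝ)+1) * ((n:ℝ) * E^4) ≤ E^8 := by
    have hnE : (n:ℝ) ≤ E^2 := by linarith
    have h4 : (0:ℝ) ≤ E^4 := by positivity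
    calc ((n:ℝ)+1) * ((n:ℝ) * E^4) = (((n:ℝ)+1) * (n:ℝ)) * E^4 := by ring
      _ ≤ (E^2 * E^2) * E^4 := by
          apply mul_le_mul_of_nonneg_right _ h4
          exact mul_le_mul hn2 hnE (by linarith) (by positivity)
      _ = E^8 := by ring
  calc ∑ r ∈ Finset.range (n + 1), a r ≤ E^8 := le_trans hsum hfinal
    _ = Real.exp 8 ^ s := by
      rw [← Real.exp_mul, hE, ← Real.exp_nat_mul]
      norm_num [mul_comm]
end

section
/- For every real α ≥ 1, √α·H(1/α) < 2, where H is the binary entropy function (with the convention H(1) = 0). -/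
/-- The binary entropy function `H(x) = x log₂(1/x) + (1-x) log₂(1/(1-x))`.
(With Lean's conventions `(0 : ℝ)⁻¹ = 0` and `Real.logb 2 0 = 0`, this automatically
satisfies `H(0) = H(1) = 0`.) -/
noncomputable def binEnt (x : ℝ) : ℝ :=
  x * Real.logb 2 x⁻¹ + (1 - x) * Real.logb 2 (1 - x)⁻¹

lemma binEnt_key {x : ℝ} (hx : 0 < x) (hx1 : x < 1) : binEnt x < 2 * Real.sqrt x := by
  have hlog2 : (0:ℝ) < Real.log 2 := Real.log_pos one_lt_two
  set t := x ^ ((1:ℝ)/4) with ht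
  have ht0 : 0 < t := Real.rpow_pos_of_pos hx _
  have ht4 : t ^ 4 = x := by
    rw [ht, ← Real.rpow_natCast (x ^ ((1:ℝ)/4)) 4, ← Real.rpow_mul hx.le]
    norm_num
  have ht2 : t ^ 2 = Real.sqrt x := by
    rw [ht, ← Real.rpow_natCast (x ^ ((1:ℝ)/4)) 2, ← Real.rpow_mul hx.le,
      Real.sqrt_eq_rpow]
    norm_num
  have hlogt : Real.log t = (1/4) * Real.log x := by
    rw [ht, Real.log_rpow hx]
  -- first term bound : x * log x⁻¹ ≤ 4 t^3 - 4 x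
  have h1 : x * Real.log x⁻¹ ≤ 4 * t ^ 3 - 4 * x := by
    have hstep : Real.log t⁻¹ ≤ t⁻¹ - 1 :=
      Real.log_le_sub_one_of_pos (inv_pos.mpr ht0)
    have hlogxinv : Real.log x⁻¹ = 4 * Real.log t⁻¹ := by
      rw [Real.log_inv, Real.log_inv, hlogt]; ring
    have : x * Real.log x⁻¹ ≤ x * (4 * (t⁻¹ - 1)) := by
      rw [hlogxinv]
      have := mul_le_mul_of_nonneg_left hstep hx.le
      nlinarith
    have hxt : x * t⁻¹ = t ^ 3 := by
      field_simp
      nlinarith [ht4]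
    calc x * Real.log x⁻¹ ≤ x * (4 * (t⁻¹ - 1)) := this
      _ = 4 * (x * t⁻¹) - 4 * x := by ring
      _ = 4 * t ^ 3 - 4 * x := by rw [hxt]
  -- second term bound : (1-x) * log (1-x)⁻¹ ≤ x
  have h2 : (1 - x) * Real.log (1 - x)⁻¹ ≤ x := by
    have h1x : 0 < 1 - x := by linarith
    have hstep : Real.log (1 - x)⁻¹ ≤ (1 - x)⁻¹ - 1 :=
      Real.log_le_sub_one_of_pos (inv_pos.mpr h1x)
    have := mul_le_mul_of_nonneg_left hstep h1x.le
    have hinv : (1 - x) * (1 - x)⁻¹ = 1 := mul_inv_cancel₀ h1x.ne'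
    nlinarith
  -- polynomial bound : 4 t^3 - 3 x < 2 log 2 * √x
  have h3 : 4 * t ^ 3 - 3 * x < 2 * Real.log 2 * Real.sqrt x := by
    rw [← ht2, ← ht4]
    nlinarith [mul_nonneg (sq_nonneg t) (sq_nonneg (3 * t - 2)),
      Real.log_two_gt_d9, mul_pos ht0 ht0]
  -- combine
  have hBE : binEnt x * Real.log 2 = x * Real.log x⁻¹ + (1 - x) * Real.log (1 - x)⁻¹ := by
    simp only [binEnt, Real.logb]
    field_simp
  have : binEnt x * Real.log 2 < (2 * Real.sqrt x) * Real.log 2 := by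
    rw [hBE]
    nlinarith
  exact lt_of_mul_lt_mul_right this hlog2.le

/-- For every real `α ≥ 1`, `√α · H(1/α) < 2`. -/
theorem sqrt_mul_binEnt_lt_two : ∀ α : ℝ, 1 ≤ α → Real.sqrt α * binEnt (1 / α) < 2 := by
  intro α hα
  rcases eq_or_lt_of_le hα with h1 | h1
  · subst h1
    norm_num [binEnt]
  · have hα0 : 0 < α := by linarith
    have hx0 : 0 < 1 / α := by positivity
    have hx1 : 1 / α < 1 := by
      rw [div_lt_one hα0]; exact h1
    have hkey := binEnt_key hx0 hx1
    have hs : 0 < Real.sqrt α := Real.sqrt_pos.mpr hα0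
    have hmul : Real.sqrt α * Real.sqrt (1 / α) = 1 := by
      rw [← Real.sqrt_mul hα0.le]
      rw [mul_one_div, div_self hα0.ne', Real.sqrt_one]
    calc Real.sqrt α * binEnt (1 / α) < Real.sqrt α * (2 * Real.sqrt (1 / α)) :=
          mul_lt_mul_of_pos_left hkey hs
      _ = 2 * (Real.sqrt α * Real.sqrt (1 / α)) := by ring
      _ = 2 := by rw [hmul, mul_one]
end

section
/- Let m ≥ 1 be an integer, n' = 2^m − 1, and n = n' + m. Let A be the m×n' matrix over F₂ whose columns are all the nonzero vectors of F₂^m (each exactly once), and let G be the 2m×n block-diagonal matrix with blocks A and the m×m identity matrix I_m. Let V ⊆ F₂ⁿ be the span of the rows of G. Then the covering radius of V^⊥ equals m + 1; that is, every coset of V^⊥ in F₂ⁿ contains a vector of Hamming weight at most m + 1, and some coset of V^⊥ contains no vector of Hamming weight at most m. -/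
lemma ham_split (a b : ℕ) (z : Fin (a + b) → ZMod 2) :
    hammingNorm z = hammingNorm (fun j : Fin a => z (Fin.castAdd b j))
      + hammingNorm (fun k : Fin b => z (Fin.natAdd a k)) := by
  simp only [hammingNorm, Finset.card_filter]
  exact Fin.sum_univ_add _

/-- For the code generated by the block-diagonal matrix with blocks the Hadamard-code
generating matrix `A` (whose columns are all nonzero vectors of `F₂^m`, each exactly
once) and the `m × m` identity matrix, the covering radius of `V^⊥` equals `m + 1`:
every coset of `V^⊥` contains a vector of weight at most `m + 1`, and some coset
contains no vector of weight at most `m`. -/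
theorem hadamard_plus_identity_covering_radius
    (m n' n : ℕ) (hm : 1 ≤ m) (hn' : n' = 2 ^ m - 1) (hn : n = n' + m)
    (A : Fin m → Fin n' → ZMod 2)
    (hA0 : ∀ j : Fin n', (fun r => A r j) ≠ 0)
    (hA : ∀ v : Fin m → ZMod 2, v ≠ 0 → ∃! j : Fin n', (fun r => A r j) = v)
    (G : Fin (2 * m) → Fin n → ZMod 2)
    (hG : ∀ (r : Fin (2 * m)) (j : Fin n), G r j =
      if hr : (r : ℕ) < m then
        (if hj : (j : ℕ) < n' then A ⟨(r : ℕ), hr⟩ ⟨(j : ℕ), hj⟩ else 0)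
      else
        (if (j : ℕ) < n' then 0
         else if (r : ℕ) - m = (j : ℕ) - n' then 1 else 0))
    (V : Submodule (ZMod 2) (Fin n → ZMod 2))
    (hV : V = Submodule.span (ZMod 2) (Set.range G)) :
    (∀ x : Fin n → ZMod 2, ∃ z : Fin n → ZMod 2,
        z - x ∈ dualSet (V : Set (Fin n → ZMod 2)) ∧ hammingNorm z ≤ m + 1) ∧
    (∃ x : Fin n → ZMod 2, ∀ z : Fin n → ZMod 2,
        z - x ∈ dualSet (V : Set (Fin n → ZMod 2)) → m < hammingNorm z) := by

  subst hn hV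
  -- membership in the dual set ↔ orthogonal to each row of G
  have hmem : ∀ y : Fin (n' + m) → ZMod 2,
      y ∈ dualSet (↑(Submodule.span (ZMod 2) (Set.range G))) ↔
        ∀ r : Fin (2 * m), ∑ i, G r i * y i = 0 := by
    intro y
    constructor
    · intro h r; exact h (G r) (Submodule.subset_span ⟨r, rfl⟩)
    · intro h x hx
      refine Submodule.span_induction ?_ ?_ ?_ ?_ hx
      · rintro _ ⟨r, rfl⟩; exact h r
      · simp
      · intro a b _ _ ha hb
        simp [add_mul, Finset.sum_add_distrib, ha, hb]
      · intro c a _ ha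
        simp only [Pi.smul_apply, smul_eq_mul, mul_assoc, ← Finset.mul_sum, ha, mul_zero]
  -- row computations
  have hrow1 : ∀ (r : Fin m) (rr : Fin (2 * m)), (rr : ℕ) = (r : ℕ) →
      ∀ y : Fin (n' + m) → ZMod 2,
      ∑ i, G rr i * y i = ∑ j : Fin n', A r j * y (Fin.castAdd m j) := by
    intro r rr hrr y
    rw [Fin.sum_univ_add]
    have h1 : ∀ j : Fin n', G rr (Fin.castAdd m j) = A r j := by
      intro j
      rw [hG]
      rw [dif_pos (by omega)]
      simp only [Fin.coe_castAdd]
      rw [dif_pos j.isLt]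
      exact congr_arg₂ A (Fin.ext hrr) (Fin.ext rfl)
    have h2 : ∀ k : Fin m, G rr (Fin.natAdd n' k) = 0 := by
      intro k
      rw [hG]
      rw [dif_pos (by omega)]
      simp only [Fin.coe_natAdd]
      rw [dif_neg (by omega)]
    simp [h1, h2]
  have hrow2 : ∀ (r : Fin m) (rr : Fin (2 * m)), (rr : ℕ) = m + (r : ℕ) →
      ∀ y : Fin (n' + m) → ZMod 2,
      ∑ i, G rr i * y i = y (Fin.natAdd n' r) := by
    intro r rr hrr y
    rw [Fin.sum_univ_add]
    have h1 : ∀ j : Fin n', G rr (Fin.castAdd m j) = 0 := by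
      intro j
      rw [hG]
      rw [dif_neg (by omega)]
      simp only [Fin.coe_castAdd]
      rw [if_pos j.isLt]
    have h2 : ∀ k : Fin m, G rr (Fin.natAdd n' k)
        = if r = k then 1 else 0 := by
      intro k
      rw [hG]
      rw [dif_neg (by omega)]
      simp only [Fin.coe_natAdd]
      rw [if_neg (by omega)]
      congr 1
      simp only [eq_iff_iff, Fin.ext_iff]
      omega
    simp only [h1, h2, zero_mul, Finset.sum_const_zero, zero_add, ite_mul, one_mul, zero_mul]
    rw [Finset.sum_ite_eq]
    simp
  -- nicer characterization
  have hmem' : ∀ y : Fin (n' + m) → ZMod 2,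
      y ∈ dualSet (↑(Submodule.span (ZMod 2) (Set.range G))) ↔
        ((∀ r : Fin m, ∑ j : Fin n', A r j * y (Fin.castAdd m j) = 0) ∧
         (∀ r : Fin m, y (Fin.natAdd n' r) = 0)) := by
    intro y
    rw [hmem]
    constructor
    · intro h
      constructor
      · intro r; rw [← hrow1 r ⟨(r : ℕ), by omega⟩ rfl y]; exact h _
      · intro r; rw [← hrow2 r ⟨m + (r : ℕ), by omega⟩ rfl y]; exact h _
    · rintro ⟨h1, h2⟩ r
      rcases lt_or_ge (r : ℕ) m with hr | hr
      · rw [hrow1 ⟨(r : ℕ), hr⟩ r rfl y]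
        exact h1 _
      · rw [hrow2 ⟨(r : ℕ) - m, by omega⟩ r (by simp; omega) y]
        exact h2 _
  -- difference of syndromes
  have hsub : ∀ (r : Fin m) (z x : Fin (n' + m) → ZMod 2),
      ∑ j : Fin n', A r j * (z - x) (Fin.castAdd m j)
        = (∑ j : Fin n', A r j * z (Fin.castAdd m j))
          - ∑ j : Fin n', A r j * x (Fin.castAdd m j) := by
    intro r z x
    rw [← Finset.sum_sub_distrib]
    simp [mul_sub]
  have hle : ∀ f : Fin m → ZMod 2, hammingNorm f ≤ m :=
    fun f => le_trans hammingNorm_le_card_fintype (by simp)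
  constructor
  · -- covering radius ≤ m + 1
    intro x
    by_cases h0 : ∀ r : Fin m, ∑ j : Fin n', A r j * x (Fin.castAdd m j) = 0
    · refine ⟨Fin.append 0 (fun k => x (Fin.natAdd n' k)), ?_, ?_⟩
      · rw [hmem']
        constructor
        · intro r
          rw [hsub, h0 r]
          simp [Fin.append_left]
        · intro r
          simp [Fin.append_right]
      · rw [ham_split]
        simp only [Fin.append_left, Fin.append_right]
        have h2 := hle (fun k => x (Fin.natAdd n' k))
        simp only [Pi.zero_apply]
        have h1 : hammingNorm (fun _ : Fin n' => (0 : ZMod 2)) = 0 := by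
          rw [hammingNorm]; simp
        omega
    · have hs0 : (fun r : Fin m => ∑ j : Fin n', A r j * x (Fin.castAdd m j)) ≠ 0 := by
        intro h; exact h0 (fun r => congrFun h r)
      obtain ⟨j₀, hj₀, -⟩ := hA _ hs0
      have hj₀' : ∀ r, A r j₀ = ∑ j : Fin n', A r j * x (Fin.castAdd m j) :=
        fun r => congrFun hj₀ r
      refine ⟨Fin.append (fun j => if j = j₀ then 1 else 0) (fun k => x (Fin.natAdd n' k)),
        ?_, ?_⟩
      · rw [hmem']
        constructor
        · intro r
          rw [hsub]
          have e : (∑ j : Fin n', A r j *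
              (Fin.append (fun j => if j = j₀ then (1 : ZMod 2) else 0)
                (fun k => x (Fin.natAdd n' k))) (Fin.castAdd m j))
              = A r j₀ := by
            simp only [Fin.append_left, mul_ite, mul_one, mul_zero]
            rw [Finset.sum_ite_eq']
            simp
          rw [e, hj₀' r, sub_self]
        · intro r
          simp [Fin.append_right]
      · rw [ham_split]
        simp only [Fin.append_left, Fin.append_right]
        have h2 := hle (fun k => x (Fin.natAdd n' k))
        have h1 : hammingNorm (fun j : Fin n' => if j = j₀ then (1 : ZMod 2) else 0) ≤ 1 := by
          rw [hammingNorm]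
          refine le_trans (Finset.card_le_card
            (?_ : _ ⊆ ({j₀} : Finset (Fin n')))) (by simp)
          intro j hj
          simp only [Finset.mem_filter, Finset.mem_univ, true_and] at hj
          simp only [Finset.mem_singleton]
          by_contra hne
          exact hj (by simp [hne])
        omega
  · -- covering radius > m
    have hone : (fun _ : Fin m => (1 : ZMod 2)) ≠ 0 := by
      intro h
      have := congrFun h ⟨0, by omega⟩
      simp at this
    obtain ⟨j₀, -, -⟩ := hA _ hone
    refine ⟨Fin.append (fun j => if j = j₀ then 1 else 0) (fun _ => 1), ?_⟩
    intro z hz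
    rw [hmem'] at hz
    obtain ⟨h1, h2⟩ := hz
    have hz2 : ∀ k : Fin m, z (Fin.natAdd n' k) = 1 := by
      intro k
      have hk := h2 k
      simp only [Pi.sub_apply, Fin.append_right, sub_eq_zero] at hk
      exact hk
    have hz1ne : (fun j : Fin n' => z (Fin.castAdd m j)) ≠ 0 := by
      intro hzz
      apply hA0 j₀
      funext r
      have hr := h1 r
      rw [hsub] at hr
      have e0 : ∑ j : Fin n', A r j * z (Fin.castAdd m j) = 0 := by
        have hzz' : ∀ j, z (Fin.castAdd m j) = 0 := fun j => congrFun hzz j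
        simp [hzz']
      have e1 : (∑ j : Fin n', A r j *
          (Fin.append (fun j => if j = j₀ then (1 : ZMod 2) else 0)
            (fun _ : Fin m => (1 : ZMod 2))) (Fin.castAdd m j)) = A r j₀ := by
        simp only [Fin.append_left, mul_ite, mul_one, mul_zero]
        rw [Finset.sum_ite_eq']
        simp
      rw [e0, e1, zero_sub, neg_eq_zero] at hr
      exact hr
    rw [ham_split]
    have hzn2 : hammingNorm (fun k : Fin m => z (Fin.natAdd n' k)) = m := by
      rw [hammingNorm]
      rw [Finset.filter_true_of_mem]
      · simp
      · intro k _
        simp [hz2 k]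
    have hzn1 : 0 < hammingNorm (fun j : Fin n' => z (Fin.castAdd m j)) :=
      hammingNorm_pos_iff.mpr hz1ne
    omega
end
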